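/- arXiv:2005.08585 — 4 statements merged into one kernel-verified Lean document; each statement's English description precedes it below -/
import Mathlib

section
/- Let J be a convex body in ℝ^d and I a finite subset of ℤ^d containing extreme points in ℤ^d. A point u of J belongs to the inner boundary ∂⁻_I J = J \ (J ⊖ I) if and only if there exists v ∈ ex(I) such that u + v ∉ J. Consequently, if 𝖩 = conv(J ∩ ℤ^d), then the integer points of ∂⁻_I 𝖩 coincide with the integer points of ∂⁻_I J, i.e. ∂⁻_I 𝖩 ∩ ℤ^d = ∂⁻_I J ∩ ℤ^d. -/
open Set

/-- The lattice points: points of `ℝ^d` with all coordinates integers. -/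
def IsLatticePt {d : ℕ} (x : EuclideanSpace ℝ (Fin d)) : Prop :=
  ∀ i, ∃ n : ℤ, x i = (n : ℝ)

/-- Erosion `J ⊖ I = {x | ∀ i ∈ I, x + i ∈ J}`. -/
def erode {d : ℕ} (J I : Set (EuclideanSpace ℝ (Fin d))) : Set (EuclideanSpace ℝ (Fin d)) :=
  {x | ∀ i ∈ I, x + i ∈ J}

/-- Inner morphological boundary `∂⁻_I J = J \ (J ⊖ I)`. -/
def innerBd {d : ℕ} (J I : Set (EuclideanSpace ℝ (Fin d))) : Set (EuclideanSpace ℝ (Fin d)) :=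
  J \ erode J I

/-! For a finite `I`, Krein–Milman shows that `conv I` is the convex hull of its finitely many
extreme points, so a translate `u + I` lies in a convex `J` as soon as `u + ex(I)` does.
For lattice `u` and `I`, all points `u + i` are lattice points, and a convex body and the convex
hull of its lattice points contain the same lattice points. -/

theorem Set.Finite.convexHull_extremePoints_convexHull {E : Type*} [AddCommGroup E] [Module ℝ E]
    [TopologicalSpace E] [T2Space E] [IsTopologicalAddGroup E] [ContinuousSMul ℝ E]
    [LocallyConvexSpace ℝ E] {s : Set E} (hs : s.Finite) :
    convexHull ℝ ((convexHull ℝ s).extremePoints ℝ) = convexHull ℝ s := by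
  have hclosed : IsClosed (convexHull ℝ ((convexHull ℝ s).extremePoints ℝ)) :=
    ((hs.subset extremePoints_convexHull_subset).isCompact_convexHull (𝕜 := ℝ)).isClosed
  rw [← hclosed.closure_eq]
  exact closure_convexHull_extremePoints (hs.isCompact_convexHull (𝕜 := ℝ)) (convex_convexHull ℝ s)

theorem Convex.mem_convexHull_inter_iff {𝕜 E : Type*} [Field 𝕜] [LinearOrder 𝕜]
    [IsStrictOrderedRing 𝕜] [AddCommGroup E] [Module 𝕜 E] {J S : Set E} (hJ : Convex 𝕜 J)
    {x : E} (hx : x ∈ S) : x ∈ convexHull 𝕜 (J ∩ S) ↔ x ∈ J :=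
  ⟨fun h => convexHull_min inter_subset_left hJ h, fun h => subset_convexHull 𝕜 _ ⟨h, hx⟩⟩

theorem IsLatticePt.add {d : ℕ} {x y : EuclideanSpace ℝ (Fin d)}
    (hx : IsLatticePt x) (hy : IsLatticePt y) : IsLatticePt (x + y) := by
  intro i
  obtain ⟨m, hm⟩ := hx i
  obtain ⟨n, hn⟩ := hy i
  exact ⟨m + n, by simp [hm, hn]⟩

section

variable {d : ℕ} {J K I : Set (EuclideanSpace ℝ (Fin d))}

theorem mem_erode_iff_forall_extremePoints (hJ : Convex ℝ J) (hI : I.Finite)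
    {u : EuclideanSpace ℝ (Fin d)} :
    u ∈ erode J I ↔ ∀ v ∈ (convexHull ℝ I).extremePoints ℝ, u + v ∈ J := by
  refine ⟨fun h v hv => h v (extremePoints_convexHull_subset hv), fun h i hi => ?_⟩
  have hsub : convexHull ℝ ((convexHull ℝ I).extremePoints ℝ) ⊆ (fun v => u + v) ⁻¹' J :=
    convexHull_min h (hJ.translate_preimage_right u)
  rw [hI.convexHull_extremePoints_convexHull] at hsub
  exact hsub (subset_convexHull ℝ I hi)

theorem mem_innerBd_iff_exists_extremePoints (hJ : Convex ℝ J) (hI : I.Finite)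
    {u : EuclideanSpace ℝ (Fin d)} (hu : u ∈ J) :
    u ∈ innerBd J I ↔ ∃ v ∈ (convexHull ℝ I).extremePoints ℝ, u + v ∉ J := by
  simp only [innerBd, mem_sdiff, hu, true_and, mem_erode_iff_forall_extremePoints hJ hI, not_forall,
    exists_prop]

theorem innerBd_inter_latticePts_congr (hI : ∀ v ∈ I, IsLatticePt v)
    (hJK : ∀ x, IsLatticePt x → (x ∈ J ↔ x ∈ K)) :
    innerBd J I ∩ {u | IsLatticePt u} = innerBd K I ∩ {u | IsLatticePt u} := by
  ext u
  simp only [innerBd, erode, mem_inter_iff, mem_sdiff, mem_ofPred_eq]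
  refine and_congr_left fun hu => ?_
  rw [hJK u hu, forall₂_congr fun i hi => hJK (u + i) (hu.add (hI i hi))]

end

theorem stmt0_general {d : ℕ} (J I : Set (EuclideanSpace ℝ (Fin d)))
    (hJconv : Convex ℝ J)
    (hIfin : I.Finite) (hIlat : ∀ v ∈ I, IsLatticePt v) :
    (∀ u ∈ J, (u ∈ innerBd J I ↔
        ∃ v ∈ Set.extremePoints ℝ (convexHull ℝ I), u + v ∉ J)) ∧
    innerBd (convexHull ℝ (J ∩ {u | IsLatticePt u})) I ∩ {u | IsLatticePt u}
      = innerBd J I ∩ {u | IsLatticePt u} :=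
  ⟨fun _ hu => mem_innerBd_iff_exists_extremePoints hJconv hIfin hu,
    innerBd_inter_latticePts_congr hIlat fun _ hx => hJconv.mem_convexHull_inter_iff hx⟩

theorem stmt0 {d : ℕ} (J I : Set (EuclideanSpace ℝ (Fin d)))
    (hJc : IsCompact J) (hJconv : Convex ℝ J)
    (hIfin : I.Finite) (hIlat : ∀ v ∈ I, IsLatticePt v) :
    (∀ u ∈ J, (u ∈ innerBd J I ↔
        ∃ v ∈ Set.extremePoints ℝ (convexHull ℝ I), u + v ∉ J)) ∧
    innerBd (convexHull ℝ (J ∩ {u | IsLatticePt u})) I ∩ {u | IsLatticePt u}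
      = innerBd J I ∩ {u | IsLatticePt u} :=
  stmt0_general J I hJconv hIfin hIlat
end

section
/- Every semi-open integral rectangle R in ℝ² contains exactly V(R) lattice points, where V is the area: if A, B ∈ ℤ², R is the semi-open rectangle with base [A,B) and height h such that the far side of R lies on a line meeting ℤ², then card(R ∩ ℤ²) = V(R). -/
open Set MeasureTheory

/-- Rotation by `π/2` in the plane. -/
def rot (v : ℝ × ℝ) : ℝ × ℝ := (-v.2, v.1)

/-- Euclidean norm in the plane. -/
noncomputable def enorm2 (v : ℝ × ℝ) : ℝ := Real.sqrt (v.1 ^ 2 + v.2 ^ 2)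

/-- The semi-open rectangle of (oriented) basis `[A,B)` and signed height `h`. -/
noncomputable def rect (A B : ℝ × ℝ) (h : ℝ) : Set (ℝ × ℝ) :=
  {x | ∃ s t : ℝ, 0 ≤ s ∧ s < 1 ∧ 0 ≤ t ∧ t < 1 ∧
    x = A + s • (B - A) + ((t * h) / enorm2 (B - A)) • rot (B - A)}

/-- The lattice points of the plane. -/
def latt : Set (ℝ × ℝ) := {x | (∃ m : ℤ, x.1 = (m : ℝ)) ∧ ∃ n : ℤ, x.2 = (n : ℝ)}

/-! A translation by `-A` followed by an integer change of coordinates of determinant `±1` sends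
`B - A` to `(g, 0)` with `g = gcd` of its coordinates, and the height vector `w` of the rectangle
to some `(c, e)` with `e > 0`; the far-side condition makes `e` an integer. Such maps preserve
lattice-point counts and areas, and the half-open parallelogram spanned by `(g, 0)` and `(c, e)`
contains exactly `g` lattice points on each of the rows `y = 0, …, e - 1`, while its area is `g e`. -/

def pgram (x₀ v w : ℝ × ℝ) : Set (ℝ × ℝ) :=
  {x | ∃ s t : ℝ, 0 ≤ s ∧ s < 1 ∧ 0 ≤ t ∧ t < 1 ∧ x = x₀ + s • v + t • w}

def cross (v w : ℝ × ℝ) : ℝ := v.1 * w.2 - w.1 * v.2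

theorem rect_eq_pgram (A B : ℝ × ℝ) (h : ℝ) :
    rect A B h = pgram A (B - A) ((h / enorm2 (B - A)) • rot (B - A)) := by
  simp only [rect, pgram, smul_smul, mul_div_assoc]

theorem volume_pgram (x₀ v w : ℝ × ℝ) :
    volume (pgram x₀ v w) = ENNReal.ofReal |cross v w| := by
  set L := Matrix.toLin (Module.Basis.finTwoProd ℝ) (Module.Basis.finTwoProd ℝ)
    !![v.1, w.1; v.2, w.2]
  have hL : ∀ y : ℝ × ℝ, L y = y.1 • v + y.2 • w := fun y => by
    ext <;> simp [L, Matrix.toLin_finTwoProd_apply] <;> ring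
  have hset : pgram x₀ v w = (x₀ + ·) '' (L '' (Ico 0 1 ×ˢ Ico 0 1)) := by
    ext x
    simp only [pgram, mem_ofPred_eq, mem_image, mem_prod, mem_Ico, hL]
    constructor
    · rintro ⟨s, t, hs₀, hs₁, ht₀, ht₁, rfl⟩
      exact ⟨_, ⟨(s, t), ⟨⟨hs₀, hs₁⟩, ht₀, ht₁⟩, rfl⟩, (add_assoc _ _ _).symm⟩
    · rintro ⟨_, ⟨⟨s, t⟩, ⟨⟨hs₀, hs₁⟩, ht₀, ht₁⟩, rfl⟩, rfl⟩
      exact ⟨s, t, hs₀, hs₁, ht₀, ht₁, (add_assoc _ _ _).symm⟩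
  have hsq : volume (Ico (0 : ℝ) 1 ×ˢ Ico (0 : ℝ) 1) = 1 := by
    simp [Measure.volume_eq_prod, Measure.prod_prod]
  rw [hset, image_add_left, measure_preimage_add, Measure.addHaar_image_linearMap,
    LinearMap.det_toLin, Matrix.det_fin_two_of, hsq, mul_one, cross]

theorem mem_latt_iff {x : ℝ × ℝ} : x ∈ latt ↔ ∃ z : ℤ × ℤ, ((z.1 : ℝ), (z.2 : ℝ)) = x := by
  constructor
  · rintro ⟨⟨m, hm⟩, n, hn⟩
    exact ⟨(m, n), Prod.ext hm.symm hn.symm⟩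
  · rintro ⟨z, rfl⟩
    exact ⟨⟨z.1, rfl⟩, z.2, rfl⟩

theorem add_mem_latt {x y : ℝ × ℝ} (hx : x ∈ latt) (hy : y ∈ latt) : x + y ∈ latt := by
  obtain ⟨⟨m, hm⟩, n, hn⟩ := hx
  obtain ⟨⟨m', hm'⟩, n', hn'⟩ := hy
  exact ⟨⟨m + m', by simp [hm, hm']⟩, n + n', by simp [hn, hn']⟩

theorem sub_mem_latt {x y : ℝ × ℝ} (hx : x ∈ latt) (hy : y ∈ latt) : x - y ∈ latt := by
  obtain ⟨⟨m, hm⟩, n, hn⟩ := hx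
  obtain ⟨⟨m', hm'⟩, n', hn'⟩ := hy
  exact ⟨⟨m - m', by simp [hm, hm']⟩, n - n', by simp [hn, hn']⟩

theorem ncard_inter_latt (S : Set (ℝ × ℝ)) :
    (S ∩ latt).ncard = {z : ℤ × ℤ | ((z.1 : ℝ), (z.2 : ℝ)) ∈ S}.ncard := by
  have hinj : Function.Injective fun z : ℤ × ℤ => ((z.1 : ℝ), (z.2 : ℝ)) := by
    rintro ⟨m, n⟩ ⟨m', n'⟩ h
    simpa using h
  rw [← ncard_image_of_injective _ hinj]
  congr 1
  ext x
  simp only [mem_inter_iff, mem_latt_iff, mem_image, mem_ofPred_eq]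
  constructor
  · rintro ⟨hx, z, rfl⟩
    exact ⟨z, hx, rfl⟩
  · rintro ⟨z, hz, rfl⟩
    exact ⟨hz, z, rfl⟩

theorem ncard_image_inter_latt {f g : ℝ × ℝ → ℝ × ℝ} (hgf : Function.LeftInverse g f)
    (hf : ∀ x ∈ latt, f x ∈ latt) (hg : ∀ x ∈ latt, g x ∈ latt) (S : Set (ℝ × ℝ)) :
    (f '' S ∩ latt).ncard = (S ∩ latt).ncard := by
  rw [← ncard_image_of_injective (S ∩ latt) hgf.injective]
  congr 1
  ext y
  constructor
  · rintro ⟨⟨x, hx, rfl⟩, hy⟩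
    exact ⟨x, ⟨hx, hgf x ▸ hg _ hy⟩, rfl⟩
  · rintro ⟨x, ⟨hx, hxl⟩, rfl⟩
    exact ⟨⟨x, hx, rfl⟩, hf x hxl⟩

noncomputable def intMap (a b c d : ℤ) : ℝ × ℝ →ₗ[ℝ] ℝ × ℝ :=
  Matrix.toLin (Module.Basis.finTwoProd ℝ) (Module.Basis.finTwoProd ℝ) !![(a : ℝ), b; c, d]

@[simp]
theorem intMap_apply (a b c d : ℤ) (x : ℝ × ℝ) :
    intMap a b c d x = (a * x.1 + b * x.2, c * x.1 + d * x.2) :=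
  Matrix.toLin_finTwoProd_apply _ _ _ _ x

theorem intMap_mem_latt (a b c d : ℤ) {x : ℝ × ℝ} (hx : x ∈ latt) : intMap a b c d x ∈ latt := by
  obtain ⟨⟨m, hm⟩, n, hn⟩ := hx
  exact ⟨⟨a * m + b * n, by simp [hm, hn]⟩, c * m + d * n, by simp [hm, hn]⟩

theorem intMap_adjugate_intMap {a b c d δ : ℤ} (hδ : δ * (a * d - b * c) = 1) (x : ℝ × ℝ) :
    intMap (δ * d) (-(δ * b)) (-(δ * c)) (δ * a) (intMap a b c d x) = x := by
  have hδ : (δ : ℝ) * (a * d - b * c) = 1 := by exact_mod_cast hδ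
  ext <;> simp only [intMap_apply] <;> push_cast
  · linear_combination x.1 * hδ
  · linear_combination x.2 * hδ

theorem cross_intMap (a b c d : ℤ) (v w : ℝ × ℝ) :
    cross (intMap a b c d v) (intMap a b c d w) = (a * d - b * c) * cross v w := by
  simp only [cross, intMap_apply]
  ring

theorem image_pgram (f : ℝ × ℝ →ₗ[ℝ] ℝ × ℝ) (x₀ v w : ℝ × ℝ) :
    (fun x => f (x - x₀)) '' pgram x₀ v w = pgram 0 (f v) (f w) := by
  ext y
  simp only [pgram, mem_image, mem_ofPred_eq]
  constructor
  · rintro ⟨_, ⟨s, t, hs₀, hs₁, ht₀, ht₁, rfl⟩, rfl⟩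
    exact ⟨s, t, hs₀, hs₁, ht₀, ht₁, by simp [add_assoc]⟩
  · rintro ⟨s, t, hs₀, hs₁, ht₀, ht₁, rfl⟩
    exact ⟨_, ⟨s, t, hs₀, hs₁, ht₀, ht₁, rfl⟩, by simp [add_assoc]⟩

theorem ncard_intMap_image_inter_latt {a b c d : ℤ} (hdet : IsUnit (a * d - b * c))
    {x₀ : ℝ × ℝ} (hx₀ : x₀ ∈ latt) (S : Set (ℝ × ℝ)) :
    ((fun x => intMap a b c d (x - x₀)) '' S ∩ latt).ncard = (S ∩ latt).ncard := by
  obtain ⟨δ, hδ⟩ := hdet.exists_left_inv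
  refine ncard_image_inter_latt (g := fun y => intMap (δ * d) (-(δ * b)) (-(δ * c)) (δ * a) y + x₀)
    (fun x => ?_) (fun x hx => ?_) (fun y hy => ?_) S
  · simp only [intMap_adjugate_intMap hδ, sub_add_cancel]
  · exact intMap_mem_latt _ _ _ _ (sub_mem_latt hx hx₀)
  · exact add_mem_latt (intMap_mem_latt _ _ _ _ hy) hx₀

theorem exists_int_intMap_snd_eq (a b c d : ℤ) {v w : ℝ × ℝ} {g : ℝ}
    (hfv : intMap a b c d v = (g, 0)) {s : ℝ} (hw : w + s • v ∈ latt) :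
    ∃ n : ℤ, (intMap a b c d w).2 = n := by
  obtain ⟨n, hn⟩ := (intMap_mem_latt a b c d hw).2
  rw [map_add, map_smul, hfv, Prod.smul_mk, smul_zero, Prod.snd_add, add_zero] at hn
  exact ⟨n, hn⟩

theorem abs_cross_eq_of_intMap_eq {a b c d : ℤ} (hdet : IsUnit (a * d - b * c)) {v w : ℝ × ℝ}
    {g : ℝ} (hfv : intMap a b c d v = (g, 0)) : |cross v w| = |g * (intMap a b c d w).2| := by
  have hδ : |(a : ℝ) * d - b * c| = 1 := by exact_mod_cast Int.isUnit_iff_abs_eq.mp hdet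
  rw [← one_mul |cross v w|, ← hδ, ← abs_mul, ← cross_intMap, hfv, cross, mul_zero, sub_zero]

theorem exists_intMap_normalize {v w : ℝ × ℝ} (hv : v ∈ latt) (hvw : cross v w ≠ 0) :
    ∃ a b c d : ℤ, IsUnit (a * d - b * c) ∧
      ∃ g : ℕ, 0 < g ∧ intMap a b c d v = ((g : ℝ), 0) ∧ 0 < (intMap a b c d w).2 := by
  obtain ⟨⟨p, q⟩, rfl⟩ := mem_latt_iff.mp hv
  set g := Int.gcd p q
  have hg : 0 < g := by
    refine Int.gcd_pos_iff.mpr (not_and_or.mp fun h => hvw ?_)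
    simp [cross, h.1, h.2]
  obtain ⟨p', hp⟩ : (g : ℤ) ∣ p := Int.gcd_dvd_left p q
  obtain ⟨q', hq⟩ : (g : ℤ) ∣ q := Int.gcd_dvd_right p q
  set a := Int.gcdA p q
  set b := Int.gcdB p q
  have hbezout : a * p' + b * q' = 1 := by
    have h := Int.gcd_eq_gcd_ab p q
    rw [← mul_right_inj' (Int.natCast_ne_zero.mpr hg.ne')]
    linear_combination -h - a * hp - b * hq
  set k := (p' : ℝ) * w.2 - q' * w.1
  have hk : cross ((p : ℝ), (q : ℝ)) w = g * k := by
    simp only [cross, k, hp, hq]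
    push_cast
    ring
  -- the orientation `σ = ±1` is chosen so that `w` is sent to the upper half-plane
  obtain ⟨σ, hσ, hσk⟩ : ∃ σ : ℤ, σ ^ 2 = 1 ∧ 0 < σ * k := by
    rcases (right_ne_zero_of_mul (hk ▸ hvw)).lt_or_gt with h | h
    · exact ⟨-1, by norm_num, by push_cast; linarith⟩
    · exact ⟨1, by norm_num, by push_cast; linarith⟩
  refine ⟨a, b, -(σ * q'), σ * p', ?_, g, hg, ?_, ?_⟩
  · exact .of_mul_eq_one σ (by linear_combination σ ^ 2 * hbezout + hσ)
  · have hbezoutR : (a : ℝ) * p' + b * q' = 1 := by exact_mod_cast hbezout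
    simp only [intMap_apply, hp, hq]
    push_cast
    ext
    · linear_combination (g : ℝ) * hbezoutR
    · ring
  · simp only [intMap_apply, k] at hσk ⊢
    push_cast
    linarith

theorem intCast_mem_pgram_iff {g e : ℕ} (hg : 0 < g) (he : 0 < e) (c : ℝ) (m n : ℤ) :
    ((m : ℝ), (n : ℝ)) ∈ pgram 0 ((g : ℝ), 0) (c, (e : ℝ)) ↔
      (0 ≤ n ∧ n < e) ∧ 0 ≤ m - ⌈n * c / e⌉ ∧ m - ⌈n * c / e⌉ < g := by
  have hgR : (0 : ℝ) < g := Nat.cast_pos.mpr hg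
  have heR : (0 : ℝ) < e := Nat.cast_pos.mpr he
  have hceil_le : ⌈n * c / e⌉ ≤ m ↔ (n * c / e : ℝ) ≤ m := Int.ceil_le
  have hlt_ceil : m - g < ⌈n * c / e⌉ ↔ ((m - g : ℤ) : ℝ) < n * c / e := Int.lt_ceil
  push_cast at hlt_ceil
  simp only [pgram, mem_ofPred_eq, zero_add, Prod.ext_iff, Prod.fst_add, Prod.snd_add,
    Prod.smul_fst, Prod.smul_snd, smul_eq_mul, mul_zero]
  constructor
  · rintro ⟨s, t, hs₀, hs₁, ht₀, ht₁, hm, hn⟩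
    have htc : (n * c / e : ℝ) = t * c := by rw [hn]; field_simp
    have hn₀ : (0 : ℝ) ≤ n := by rw [hn]; positivity
    have hne : (n : ℝ) < e := by rw [hn]; nlinarith
    have hm₀ : (n * c / e : ℝ) ≤ m := by rw [hm, htc]; nlinarith
    have hmg : (m : ℝ) - g < n * c / e := by rw [hm, htc]; nlinarith
    refine ⟨⟨by exact_mod_cast hn₀, by exact_mod_cast hne⟩, ?_, ?_⟩
    · linarith [hceil_le.mpr hm₀]
    · linarith [hlt_ceil.mpr hmg]
  · rintro ⟨⟨hn₀, hne⟩, hm₀, hmg⟩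
    have hm₀' := hceil_le.mp (by linarith)
    have hmg' := hlt_ceil.mp (by linarith)
    refine ⟨(m - n * c / e) / g, n / e, ?_, ?_, ?_, ?_, ?_, ?_⟩
    · exact div_nonneg (by linarith) hgR.le
    · rw [div_lt_one hgR]; linarith
    · exact div_nonneg (by exact_mod_cast hn₀) heR.le
    · rw [div_lt_one heR]; exact_mod_cast hne
    · field_simp; ring
    · field_simp

theorem ncard_pgram_inter_latt {g e : ℕ} (hg : 0 < g) (he : 0 < e) (c : ℝ) :
    (pgram 0 ((g : ℝ), 0) (c, (e : ℝ)) ∩ latt).ncard = g * e := by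
  set shear : ℤ × ℤ → ℤ × ℤ := fun z => (z.1 + ⌈z.2 * c / e⌉, z.2)
  have hshear : Function.Injective shear := by
    rintro ⟨i, n⟩ ⟨i', n'⟩ h
    simp only [shear, Prod.mk.injEq] at h
    obtain ⟨hi, rfl⟩ := h
    simpa using hi
  have hset : {z : ℤ × ℤ | ((z.1 : ℝ), (z.2 : ℝ)) ∈ pgram 0 ((g : ℝ), 0) (c, (e : ℝ))} =
      shear '' ↑(Finset.Ico 0 (g : ℤ) ×ˢ Finset.Ico 0 (e : ℤ)) := by
    ext ⟨m, n⟩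
    simp only [mem_ofPred_eq, intCast_mem_pgram_iff hg he, mem_image, Finset.coe_product,
      Finset.coe_Ico, mem_prod, mem_Ico, Prod.exists, shear, Prod.mk.injEq]
    constructor
    · rintro ⟨hn, hm⟩
      exact ⟨m - ⌈n * c / e⌉, n, ⟨hm, hn⟩, by ring, rfl⟩
    · rintro ⟨i, n, ⟨hi, hn⟩, rfl, rfl⟩
      simpa using ⟨hn, hi⟩
  rw [ncard_inter_latt, hset, ncard_image_of_injective _ hshear, ncard_coe_finset,
    Finset.card_product, Int.card_Ico, Int.card_Ico]
  simp

theorem enorm2_ne_zero {v : ℝ × ℝ} (hv : v ≠ 0) : enorm2 v ≠ 0 := by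
  intro h0
  rw [enorm2, Real.sqrt_eq_zero (by positivity)] at h0
  have h1 : v.1 = 0 := by nlinarith [sq_nonneg v.1, sq_nonneg v.2]
  have h2 : v.2 = 0 := by nlinarith [sq_nonneg v.1, sq_nonneg v.2]
  exact hv (Prod.ext h1 h2)

theorem cross_smul_rot (k : ℝ) (v : ℝ × ℝ) : cross v (k • rot v) = k * enorm2 v ^ 2 := by
  rw [enorm2, Real.sq_sqrt (by positivity)]
  simp only [cross, rot, Prod.smul_mk, smul_eq_mul]
  ring

theorem stmt10 (A B : ℝ × ℝ) (hAB : A ≠ B) (h : ℝ) (hh : h ≠ 0)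
    (hAlat : A ∈ latt) (hBlat : B ∈ latt)
    -- the far side of the rectangle lies on a line meeting `ℤ²`
    (hfar : ∃ z ∈ latt, ∃ s : ℝ,
      z = A + (h / enorm2 (B - A)) • rot (B - A) + s • (B - A)) :
    ((rect A B h ∩ latt).ncard : ℝ) = (volume (rect A B h)).toReal := by
  set v := B - A
  set w := (h / enorm2 v) • rot v
  have hL : enorm2 v ≠ 0 := enorm2_ne_zero (sub_ne_zero.mpr hAB.symm)
  have hvw : cross v w ≠ 0 := by
    rw [cross_smul_rot]
    exact mul_ne_zero (div_ne_zero hh hL) (pow_ne_zero 2 hL)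
  obtain ⟨a, b, c, d, hdet, g, hg, hfv, hfw⟩ :=
    exists_intMap_normalize (sub_mem_latt hBlat hAlat) hvw
  obtain ⟨e, hfe⟩ : ∃ e : ℕ, (intMap a b c d w).2 = e := by
    obtain ⟨z, hz, s, rfl⟩ := hfar
    have hw : w + s • v ∈ latt := by simpa [add_assoc] using sub_mem_latt hz hAlat
    obtain ⟨n, hn⟩ := exists_int_intMap_snd_eq a b c d hfv hw
    lift n to ℕ using (Int.cast_pos.mp (hn ▸ hfw)).le
    exact ⟨n, by rw [hn, Int.cast_natCast]⟩
  have hcount : (rect A B h ∩ latt).ncard = g * e := by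
    rw [rect_eq_pgram, ← ncard_intMap_image_inter_latt hdet hAlat, image_pgram, hfv,
      ← Prod.mk.eta (p := intMap a b c d w), hfe,
      ncard_pgram_inter_latt hg (by exact_mod_cast hfe ▸ hfw)]
  rw [hcount, rect_eq_pgram, volume_pgram, abs_cross_eq_of_intMap_eq hdet hfv, hfe,
    ENNReal.toReal_ofReal (abs_nonneg _), abs_of_nonneg (by positivity), Nat.cast_mul]
end

section
/- Let f be a cellular automaton on a ℤ^d-subshift X with domain I, let J be a bounded subset of ℝ^d, and let * denote either topological entropy or measure entropy for an f-invariant measure. Then h_*(f, 𝖯_J) = h_*(f, 𝖯_{∂⁻_I J}) and h_*(f, 𝖯_J) ≤ h_*(f, 𝖯_{∂⁺_I J}), where 𝖯_L is the partition of X into L∩ℤ^d-cylinders. -/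
open Set MeasureTheory Filter Topology Pointwise

/-- The group `ℤ^d`. -/
abbrev Zd (d : ℕ) := Fin d → ℤ

/-- Configurations `𝒜^{ℤ^d}` with the product topology (`A` discrete). -/
abbrev Config (A : Type*) (d : ℕ) := Zd d → A

/-- The shift action of `ℤ^d`. -/
def shift {A : Type*} {d : ℕ} (l : Zd d) (x : Config A d) : Config A d := fun k => x (k + l)

/-- Embedding of `ℤ^d` in `ℝ^d`. -/
noncomputable def emb {d : ℕ} (z : Zd d) : EuclideanSpace ℝ (Fin d) :=
  (WithLp.equiv 2 (Fin d → ℝ)).symm fun i => (z i : ℝ)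

/-- The lattice points of a subset `J` of `ℝ^d`, as a subset of `ℤ^d`. -/
def latOf {d : ℕ} (J : Set (EuclideanSpace ℝ (Fin d))) : Set (Zd d) := {z | emb z ∈ J}

/-- Erosion of `J ⊆ ℝ^d` by a set `I ⊆ ℤ^d`. -/
noncomputable def erodeZ {d : ℕ} (J : Set (EuclideanSpace ℝ (Fin d))) (I : Set (Zd d)) :
    Set (EuclideanSpace ℝ (Fin d)) := {x | ∀ i ∈ I, x + emb i ∈ J}

/-- Dilation (Minkowski sum) of `J ⊆ ℝ^d` by a set `I ⊆ ℤ^d`. -/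
noncomputable def dilateZ {d : ℕ} (J : Set (EuclideanSpace ℝ (Fin d))) (I : Set (Zd d)) :
    Set (EuclideanSpace ℝ (Fin d)) := {y | ∃ x ∈ J, ∃ i ∈ I, y = x + emb i}

/-- Topological entropy `h_top(f, 𝖯_L)` of `f` relative to the partition of `X` into
`L`-cylinders: `lim (1/n) log #(⋁_{k<n} f^{-k} 𝖯_L)`. -/
noncomputable def topPartEnt {A : Type*} {d : ℕ} (f : Config A d → Config A d)
    (X : Set (Config A d)) (L : Set (Zd d)) : ℝ :=
  limsup (fun n : ℕ =>
    Real.log (Nat.card ((fun x => fun (k : Fin n) (j : L) => f^[k] x (j : Zd d)) '' X)) / n)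
    atTop

/-- Measure-theoretic entropy `h_μ(f, 𝖯_L)` of `f` relative to the partition into
`L`-cylinders. -/
noncomputable def measPartEnt {A : Type*} {d : ℕ} [MeasurableSpace A]
    (μ : Measure (Config A d)) (f : Config A d → Config A d) (L : Set (Zd d)) : ℝ :=
  limsup (fun n : ℕ =>
    (∑' Q : Fin n → L → A,
      Real.negMulLog
        (μ {x | ∀ (k : Fin n) (j : L), f^[k] x (j : Zd d) = Q k j}).toReal) / n) atTop


namespace Stmt16Aux
open Real


lemma negMulLog_sum_le {S : Type*} (t : Finset S) (p : S → ℝ) (hp : ∀ s, 0 ≤ p s) :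
    negMulLog (∑ s ∈ t, p s) ≤ ∑ s ∈ t, negMulLog (p s) := by
  have hT : negMulLog (∑ s ∈ t, p s) = ∑ s ∈ t, (-(p s) * Real.log (∑ s ∈ t, p s)) := by
    rw [negMulLog, ← Finset.sum_neg_distrib, Finset.sum_mul]
  rw [hT]
  refine Finset.sum_le_sum fun s hs => ?_
  rcases eq_or_lt_of_le (hp s) with h0 | hpos
  · simp [← h0, negMulLog]
  · have hle : Real.log (p s) ≤ Real.log (∑ s ∈ t, p s) :=
      Real.log_le_log hpos (Finset.single_le_sum (fun i _ => hp i) hs)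
    rw [negMulLog]
    nlinarith

lemma sum_negMulLog_le_log_card {S : Type*} [Fintype S] (r : S → ℝ) (hr : ∀ s, 0 ≤ r s)
    (hsum : ∑ s, r s = 1) : ∑ s, negMulLog (r s) ≤ Real.log (Fintype.card S) := by
  have hne : Nonempty S := by
    by_contra h
    rw [not_nonempty_iff] at h
    rw [Finset.univ_eq_empty, Finset.sum_empty] at hsum
    norm_num at hsum
  have hcard : (0:ℝ) < Fintype.card S := by
    have := Fintype.card_pos (α := S); positivity
  have key2 : ∀ s, negMulLog (r s) - r s * Real.log (Fintype.card S) ≤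
      1 / Fintype.card S - r s := by
    intro s
    rcases eq_or_lt_of_le (hr s) with h0 | hpos
    · simp [← h0]
    · have hrn : (0:ℝ) < r s * Fintype.card S := by positivity
      have h1 : Real.log (r s * Fintype.card S) ≥ 1 - (r s * Fintype.card S)⁻¹ := by
        have h2 := Real.log_le_sub_one_of_pos (x := (r s * (Fintype.card S : ℝ))⁻¹) (by positivity)
        rw [Real.log_inv] at h2; linarith
      have hexp : negMulLog (r s) - r s * Real.log (Fintype.card S)
          = - (r s * Real.log (r s * Fintype.card S)) := by
        rw [Real.log_mul (ne_of_gt hpos) (ne_of_gt hcard), negMulLog]; ring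
      rw [hexp]
      have h3 : r s * (1 - (r s * (Fintype.card S:ℝ))⁻¹) ≤ r s * Real.log (r s * Fintype.card S) :=
        mul_le_mul_of_nonneg_left h1 (le_of_lt hpos)
      have h4 : r s * (r s * (Fintype.card S:ℝ))⁻¹ = ((Fintype.card S : ℝ))⁻¹ := by
        rw [mul_inv]; field_simp
      have h3' : r s - ((Fintype.card S:ℝ))⁻¹ ≤ r s * Real.log (r s * Fintype.card S) := by
        nlinarith [h3, h4]
      rw [one_div]
      linarith
  have hsum2 := Finset.sum_le_sum (fun s (_ : s ∈ Finset.univ) => key2 s)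
  rw [Finset.sum_sub_distrib, Finset.sum_sub_distrib, ← Finset.sum_mul, hsum] at hsum2
  simp only [Finset.sum_const, Finset.card_univ, nsmul_eq_mul] at hsum2
  have : (Fintype.card S : ℝ) * (1 / Fintype.card S) = 1 := by field_simp
  linarith

lemma sum_negMulLog_le_of_sum {S : Type*} [Fintype S] (p : S → ℝ) (hp : ∀ s, 0 ≤ p s) :
    ∑ s, negMulLog (p s) ≤ negMulLog (∑ s, p s) + (∑ s, p s) * Real.log (Fintype.card S) := by
  set q := ∑ s, p s with hq
  have hq0 : 0 ≤ q := Finset.sum_nonneg fun s _ => hp s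
  rcases eq_or_lt_of_le hq0 with h0 | hqpos
  · have : ∀ s ∈ Finset.univ, p s = 0 := by
      intro s _
      exact le_antisymm (by
        have := Finset.single_le_sum (fun i (_ : i ∈ Finset.univ) => hp i) (Finset.mem_univ s)
        linarith) (hp s)
    rw [Finset.sum_congr rfl (fun s hs => by rw [this s hs, negMulLog_zero]), ← h0]
    simp
  · set r : S → ℝ := fun s => p s / q with hr
    have hrs : ∀ s, 0 ≤ r s := fun s => div_nonneg (hp s) hq0
    have hrsum : ∑ s, r s = 1 := by
      rw [hr, ← Finset.sum_div, ← hq, div_self (ne_of_gt hqpos)]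
    have hps : ∀ s, p s = q * r s := by
      intro s; rw [hr]; field_simp
    calc ∑ s, negMulLog (p s) = ∑ s, (r s * negMulLog q + q * negMulLog (r s)) := by
          refine Finset.sum_congr rfl fun s _ => ?_
          rw [hps s, Real.negMulLog_mul]
      _ = negMulLog q + q * ∑ s, negMulLog (r s) := by
          rw [Finset.sum_add_distrib, ← Finset.sum_mul, hrsum, ← Finset.mul_sum]; ring
      _ ≤ negMulLog q + q * Real.log (Fintype.card S) := by
          have := sum_negMulLog_le_log_card r hrs hrsum
          nlinarith

lemma limsup_div_le {a b : ℕ → ℝ} {C K : ℝ} (ha0 : ∀ n, 0 ≤ a n)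
    (hb0 : ∀ n, 0 ≤ b n) (hab : ∀ n, a n ≤ C + b n) (hbK : ∀ n, b n ≤ K * n) :
    limsup (fun n : ℕ => a n / n) atTop ≤ limsup (fun n : ℕ => b n / n) atTop := by
  have hbdiv : ∀ n : ℕ, b n / n ≤ max K 0 := by
    intro n
    rcases Nat.eq_zero_or_pos n with h | h
    · simp [h]
    · have hn : (0:ℝ) < n := by exact_mod_cast h
      rw [div_le_iff₀ hn]
      calc b n ≤ K * n := hbK n
        _ ≤ max K 0 * n := by gcongr; exact le_max_left _ _
  have hBdd : IsBoundedUnder (· ≤ ·) atTop (fun n : ℕ => b n / n) :=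
    isBoundedUnder_of ⟨max K 0, hbdiv⟩
  have hCobA : IsCoboundedUnder (· ≤ ·) atTop (fun n : ℕ => a n / n) :=
    isCoboundedUnder_le_of_le atTop (x := 0) fun n => div_nonneg (ha0 n) (Nat.cast_nonneg n)
  set B := limsup (fun n : ℕ => b n / n) atTop with hB
  have main : ∀ ε : ℝ, 0 < ε → limsup (fun n : ℕ => a n / n) atTop ≤ B + ε := by
    intro ε hε
    have ev1 : ∀ᶠ n : ℕ in atTop, b n / n < B + ε / 2 :=
      eventually_lt_of_limsup_lt (by linarith) hBdd
    have ev2 : ∀ᶠ n : ℕ in atTop, C / n ≤ ε / 2 :=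
      (tendsto_const_div_atTop_nhds_zero_nat C).eventually (eventually_le_nhds (by linarith))
    have ev3 : ∀ᶠ n : ℕ in atTop, a n / n ≤ B + ε := by
      filter_upwards [ev1, ev2, eventually_ge_atTop 1] with n h1 h2 h3
      have hn : (0:ℝ) < n := by exact_mod_cast h3
      have h5 : a n / n ≤ (C + b n) / n := by gcongr; exact hab n
      rw [add_div] at h5
      linarith
    exact limsup_le_of_le hCobA ev3
  by_contra hcon
  push_neg at hcon
  have hε : 0 < (limsup (fun n : ℕ => a n / n) atTop - B) / 2 := by linarith
  have := main _ hε
  linarith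

lemma limsup_div_mono {a b : ℕ → ℝ} {K : ℝ} (ha0 : ∀ n, 0 ≤ a n)
    (hb0 : ∀ n, 0 ≤ b n) (hab : ∀ n, a n ≤ b n) (hbK : ∀ n, b n ≤ K * n) :
    limsup (fun n : ℕ => a n / n) atTop ≤ limsup (fun n : ℕ => b n / n) atTop :=
  limsup_div_le (C := 0) ha0 hb0 (fun n => by have := hab n; linarith) hbK


variable {Ω : Type*} [MeasurableSpace Ω]

/-- Entropy of a finite-valued observable. -/
noncomputable def Hm {G : Type*} (μ : Measure Ω) (g : Ω → G) : ℝ :=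
  ∑' γ : G, negMulLog (μ (g ⁻¹' {γ})).toReal

lemma Hm_eq_sum {G : Type*} [Fintype G] (μ : Measure Ω) (g : Ω → G) :
    Hm μ g = ∑ γ : G, negMulLog (μ (g ⁻¹' {γ})).toReal := tsum_fintype _

lemma sum_measure_preimage {G : Type*} [Fintype G] (μ : Measure Ω) [IsProbabilityMeasure μ]
    (g : Ω → G) (hg : ∀ γ, MeasurableSet (g ⁻¹' {γ})) :
    ∑ γ : G, (μ (g ⁻¹' {γ})).toReal = 1 := by
  classical
  have hU : (⋃ γ ∈ Finset.univ, g ⁻¹' {γ}) = Set.univ := by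
    ext x; simp
  have hdisj : Set.PairwiseDisjoint ((Finset.univ : Finset G) : Set G) (fun γ => g ⁻¹' {γ}) := by
    intro γ1 _ γ2 _ hne
    exact Set.disjoint_left.mpr fun x hx1 hx2 => hne (by
      simp only [Set.mem_preimage, Set.mem_singleton_iff] at hx1 hx2; rw [← hx1, ← hx2])
  have := measure_biUnion_finset (μ := μ) hdisj (fun γ _ => hg γ)
  rw [hU, measure_univ] at this
  have h2 : ∑ γ : G, (μ (g ⁻¹' {γ})).toReal = ((∑ γ : G, μ (g ⁻¹' {γ})).toReal) := by
    rw [ENNReal.toReal_sum fun γ _ => measure_ne_top μ _]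
  rw [h2, ← this, ENNReal.toReal_one]

lemma measure_toReal_nonneg_le_one (μ : Measure Ω) [IsProbabilityMeasure μ] (s : Set Ω) :
    0 ≤ (μ s).toReal ∧ (μ s).toReal ≤ 1 :=
  ⟨ENNReal.toReal_nonneg, by
    rw [← ENNReal.toReal_one]
    exact ENNReal.toReal_mono ENNReal.one_ne_top prob_le_one⟩

lemma Hm_nonneg {G : Type*} [Fintype G] (μ : Measure Ω) [IsProbabilityMeasure μ] (g : Ω → G) :
    0 ≤ Hm μ g := by
  rw [Hm_eq_sum]
  exact Finset.sum_nonneg fun γ _ => negMulLog_nonneg (measure_toReal_nonneg_le_one μ _).1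
    (measure_toReal_nonneg_le_one μ _).2

lemma Hm_le_log_card {G : Type*} [Fintype G] (μ : Measure Ω) [IsProbabilityMeasure μ]
    (g : Ω → G) (hg : ∀ γ, MeasurableSet (g ⁻¹' {γ})) :
    Hm μ g ≤ Real.log (Fintype.card G) := by
  rw [Hm_eq_sum]
  exact sum_negMulLog_le_log_card _ (fun γ => ENNReal.toReal_nonneg)
    (sum_measure_preimage μ g hg)

/-- Data processing: if `g = φ ∘ t` on a full measure set, then `Hm g ≤ Hm t`. -/
lemma Hm_comp_le {G T : Type*} [Fintype G] [Fintype T] (μ : Measure Ω) [IsProbabilityMeasure μ]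
    (g : Ω → G) (t : Ω → T) (φ : T → G) (ht : ∀ τ, MeasurableSet (t ⁻¹' {τ}))
    (X : Set Ω) (hXm : MeasurableSet X) (hX1 : μ X = 1) (h : ∀ x ∈ X, g x = φ (t x)) :
    Hm μ g ≤ Hm μ t := by
  classical
  have hXc : μ Xᶜ = 0 := by
    rw [measure_compl hXm (measure_ne_top μ X), hX1, measure_univ, tsub_self]
  have hkey : ∀ P : Set Ω, μ (P ∩ X) = μ P := fun P =>
    le_antisymm (measure_mono Set.inter_subset_left)
      (by
        calc μ P = μ ((P ∩ X) ∪ (P ∩ Xᶜ)) := by rw [Set.inter_union_compl]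
          _ ≤ μ (P ∩ X) + μ (P ∩ Xᶜ) := measure_union_le _ _
          _ ≤ μ (P ∩ X) + 0 := by gcongr; exact le_trans (measure_mono inter_subset_right) hXc.le
          _ = μ (P ∩ X) := add_zero _)
  have hfiber : ∀ γ : G, μ (g ⁻¹' {γ}) = ∑ τ ∈ Finset.univ.filter (fun τ => φ τ = γ),
      μ (t ⁻¹' {τ}) := by
    intro γ
    have hset : g ⁻¹' {γ} ∩ X = (⋃ τ ∈ Finset.univ.filter (fun τ => φ τ = γ), t ⁻¹' {τ}) ∩ X := by
      ext x
      simp only [Set.mem_inter_iff, Set.mem_preimage, Set.mem_singleton_iff, Set.mem_iUnion,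
        Finset.mem_filter, Finset.mem_univ, true_and]
      constructor
      · rintro ⟨hgx, hxX⟩; exact ⟨⟨t x, by rw [← h x hxX, hgx], rfl⟩, hxX⟩
      · rintro ⟨⟨τ, hφτ, htx⟩, hxX⟩; exact ⟨by rw [h x hxX, htx, hφτ], hxX⟩
    have hdisj : Set.PairwiseDisjoint ((Finset.univ.filter (fun τ => φ τ = γ) : Finset T) : Set T)
        (fun τ => t ⁻¹' {τ}) := by
      intro τ1 _ τ2 _ hne
      exact Set.disjoint_left.mpr fun x hx1 hx2 => hne (by
        simp only [Set.mem_preimage, Set.mem_singleton_iff] at hx1 hx2; rw [← hx1, ← hx2])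
    calc μ (g ⁻¹' {γ}) = μ (g ⁻¹' {γ} ∩ X) := (hkey _).symm
      _ = μ ((⋃ τ ∈ Finset.univ.filter (fun τ => φ τ = γ), t ⁻¹' {τ}) ∩ X) := by rw [hset]
      _ = μ (⋃ τ ∈ Finset.univ.filter (fun τ => φ τ = γ), t ⁻¹' {τ}) := hkey _
      _ = ∑ τ ∈ Finset.univ.filter (fun τ => φ τ = γ), μ (t ⁻¹' {τ}) :=
          measure_biUnion_finset hdisj (fun τ _ => ht τ)
  calc Hm μ g = ∑ γ : G, negMulLog (∑ τ ∈ Finset.univ.filter (fun τ => φ τ = γ),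
        (μ (t ⁻¹' {τ})).toReal) := by
        rw [Hm_eq_sum]
        refine Finset.sum_congr rfl fun γ _ => ?_
        rw [hfiber γ, ENNReal.toReal_sum fun τ _ => measure_ne_top μ _]
    _ ≤ ∑ γ : G, ∑ τ ∈ Finset.univ.filter (fun τ => φ τ = γ), negMulLog (μ (t ⁻¹' {τ})).toReal :=
        Finset.sum_le_sum fun γ _ => negMulLog_sum_le _ _ (fun τ => ENNReal.toReal_nonneg)
    _ = ∑ τ : T, negMulLog (μ (t ⁻¹' {τ})).toReal := Finset.sum_fiberwise _ _ _
    _ = Hm μ t := (Hm_eq_sum μ t).symm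

/-- Conditional bound: `Hm (s, t) ≤ log |S| + Hm t`. -/
lemma Hm_pair_le {S T : Type*} [Fintype S] [Fintype T] (μ : Measure Ω) [IsProbabilityMeasure μ]
    (s : Ω → S) (t : Ω → T) (hs : ∀ σ, MeasurableSet (s ⁻¹' {σ}))
    (ht : ∀ τ, MeasurableSet (t ⁻¹' {τ})) :
    Hm μ (fun x => (s x, t x)) ≤ Real.log (Fintype.card S) + Hm μ t := by
  classical
  have hpre : ∀ σ τ, (fun x => (s x, t x)) ⁻¹' {(σ, τ)} = s ⁻¹' {σ} ∩ t ⁻¹' {τ} := by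
    intro σ τ; ext x
    simp [Prod.ext_iff]
  have hq : ∀ τ : T, (μ (t ⁻¹' {τ})).toReal
      = ∑ σ : S, (μ ((fun x => (s x, t x)) ⁻¹' {(σ, τ)})).toReal := by
    intro τ
    have hU : t ⁻¹' {τ} = ⋃ σ ∈ Finset.univ, (s ⁻¹' {σ} ∩ t ⁻¹' {τ}) := by
      ext x; simp
    have hdisj : Set.PairwiseDisjoint ((Finset.univ : Finset S) : Set S)
        (fun σ => s ⁻¹' {σ} ∩ t ⁻¹' {τ}) := by
      intro σ1 _ σ2 _ hne
      exact Set.disjoint_left.mpr fun x hx1 hx2 => hne (by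
        have h1 := hx1.1; have h2 := hx2.1
        simp only [Set.mem_preimage, Set.mem_singleton_iff] at h1 h2; rw [← h1, ← h2])
    rw [hU, measure_biUnion_finset hdisj (fun σ _ => (hs σ).inter (ht τ)),
      ENNReal.toReal_sum fun σ _ => measure_ne_top μ _]
    exact Finset.sum_congr rfl fun σ _ => by rw [hpre]
  calc Hm μ (fun x => (s x, t x))
      = ∑ τ : T, ∑ σ : S, negMulLog (μ ((fun x => (s x, t x)) ⁻¹' {(σ, τ)})).toReal := by
        rw [Hm_eq_sum]
        exact Fintype.sum_prod_type_right _
    _ ≤ ∑ τ : T, (negMulLog (μ (t ⁻¹' {τ})).toReal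
          + (μ (t ⁻¹' {τ})).toReal * Real.log (Fintype.card S)) := by
        refine Finset.sum_le_sum fun τ _ => ?_
        have := sum_negMulLog_le_of_sum
          (fun σ : S => (μ ((fun x => (s x, t x)) ⁻¹' {(σ, τ)})).toReal)
          (fun σ => ENNReal.toReal_nonneg)
        rwa [← hq τ] at this
    _ = Hm μ t + (∑ τ : T, (μ (t ⁻¹' {τ})).toReal) * Real.log (Fintype.card S) := by
        rw [Finset.sum_add_distrib, ← Finset.sum_mul, Hm_eq_sum]
    _ ≤ Real.log (Fintype.card S) + Hm μ t := by
        rw [sum_measure_preimage μ t ht, one_mul]; linarith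

/-- Counting: if `g = Φ (s x) (b x)` on `X` then `#g(X) ≤ #S * #b(X)`. -/
lemma card_image_le_mul {Ω' S B G : Type*} [Finite S] (X : Set Ω')
    (g : Ω' → G) (s : Ω' → S) (b : Ω' → B) (Φ : S → B → G)
    (h : ∀ x ∈ X, g x = Φ (s x) (b x)) (hB : (b '' X).Finite) :
    Nat.card (g '' X) ≤ Nat.card S * Nat.card (b '' X) := by
  classical
  haveI : Finite ↥(b '' X) := hB.to_subtype
  have hm : ∀ γ : ↥(g '' X), ∃ x, x ∈ X ∧ g x = ↑γ := fun γ => γ.2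
  let pick : ↥(g '' X) → Ω' := fun γ => (hm γ).choose
  have hpick : ∀ γ, pick γ ∈ X ∧ g (pick γ) = ↑γ := fun γ => (hm γ).choose_spec
  let m : ↥(g '' X) → S × ↥(b '' X) := fun γ =>
    (s (pick γ), ⟨b (pick γ), Set.mem_image_of_mem b (hpick γ).1⟩)
  have hminj : Function.Injective m := by
    intro γ1 γ2 heq
    have hs1 : s (pick γ1) = s (pick γ2) := congrArg Prod.fst heq
    have hb1 : b (pick γ1) = b (pick γ2) := congrArg (fun p => ((p.2 : ↥(b '' X)) : B)) heq
    apply Subtype.ext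
    rw [← (hpick γ1).2, ← (hpick γ2).2, h _ (hpick γ1).1, h _ (hpick γ2).1, hs1, hb1]
  calc Nat.card ↥(g '' X) ≤ Nat.card (S × ↥(b '' X)) := Nat.card_le_card_of_injective m hminj
    _ = Nat.card S * Nat.card ↥(b '' X) := Nat.card_prod _ _

lemma card_image_le_of_comp {Ω' B G : Type*} (X : Set Ω') (g : Ω' → G) (b : Ω' → B)
    (ψ : G → B) (h : ∀ x ∈ X, b x = ψ (g x)) (hG : (g '' X).Finite) :
    Nat.card (b '' X) ≤ Nat.card (g '' X) := by
  have him : b '' X = ψ '' (g '' X) := by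
    ext β
    constructor
    · rintro ⟨x, hx, rfl⟩; exact ⟨g x, Set.mem_image_of_mem g hx, (h x hx).symm⟩
    · rintro ⟨γ, ⟨x, hx, rfl⟩, rfl⟩; exact ⟨x, hx, h x hx⟩
  rw [him]
  exact Nat.card_image_le hG



lemma emb_add {d : ℕ} (a b : Zd d) : emb (a + b) = emb a + emb b := by
  ext i
  simp [emb]

lemma emb_inj {d : ℕ} : Function.Injective (emb (d := d)) := by
  intro a b hab
  funext i
  have := congrFun (congrArg (WithLp.equiv 2 (Fin d → ℝ)) hab) i
  simpa [emb] using this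

lemma latOf_finite {d : ℕ} {J : Set (EuclideanSpace ℝ (Fin d))}
    (hJb : Bornology.IsBounded J) : (latOf J).Finite := by
  obtain ⟨r, hr⟩ := hJb.subset_closedBall 0
  have hsub : latOf J ⊆ Set.pi Set.univ (fun _ : Fin d => Set.Icc (-⌈r⌉) ⌈r⌉) := by
    intro z hz
    have h1 : emb z ∈ Metric.closedBall 0 r := hr hz
    rw [Metric.mem_closedBall, dist_zero_right] at h1
    intro i _
    have h2 : |(z i : ℝ)| ≤ ‖emb z‖ := by
      have hz2 : |(emb z) i| ≤ ‖emb z‖ := by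
        rw [EuclideanSpace.norm_eq]
        rw [← Real.sqrt_sq_eq_abs]
        apply Real.sqrt_le_sqrt
        have := Finset.single_le_sum (fun j (_ : j ∈ Finset.univ) => sq_nonneg ‖(emb z) j‖)
          (Finset.mem_univ i)
        calc (emb z) i ^ 2 = ‖(emb z) i‖ ^ 2 := by rw [Real.norm_eq_abs, sq_abs]
          _ ≤ _ := this
      simpa [emb] using hz2
    have h3 : |(z i : ℝ)| ≤ r := h2.trans h1
    rw [abs_le] at h3
    constructor
    · have := h3.1
      have hc : (-(⌈r⌉:ℝ)) ≤ (z i : ℝ) := le_trans (by push_cast; linarith [Int.le_ceil r]) this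
      exact_mod_cast hc
    · have := h3.2
      have hc : (z i : ℝ) ≤ (⌈r⌉:ℝ) := le_trans this (le_trans (Int.le_ceil r) (by push_cast; linarith))
      exact_mod_cast hc
  exact Set.Finite.subset (Set.Finite.pi fun i => Set.finite_Icc _ _) hsub


end Stmt16Aux

section MainHelpers

open Set MeasureTheory Filter Topology Real

namespace Stmt16Aux

variable {A : Type*} {d : ℕ}

/-- The `n`-step observation map on lattice window `L'`. -/
def Gmap (f : Config A d → Config A d) (L' : Set (Zd d)) (n : ℕ) (x : Config A d) :
    Fin n → ↥L' → A := fun k j => f^[k] x (j : Zd d)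

/-- Restriction to a window. -/
def resMap (L' : Set (Zd d)) (x : Config A d) : ↥L' → A := fun j => x (j : Zd d)

lemma topPartEnt_eq (f : Config A d → Config A d) (X : Set (Config A d)) (L' : Set (Zd d)) :
    topPartEnt f X L'
      = limsup (fun n : ℕ => Real.log (Nat.card ((Gmap f L' n) '' X)) / n) atTop := rfl

lemma measPartEnt_eq [MeasurableSpace A] (μ : Measure (Config A d))
    (f : Config A d → Config A d) (L' : Set (Zd d)) :
    measPartEnt μ f L'
      = limsup (fun n : ℕ =>
          (∑' Q : Fin n → ↥L' → A, Real.negMulLog (μ ((Gmap f L' n) ⁻¹' {Q})).toReal) / n)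
          atTop := by
  unfold measPartEnt
  congr 1
  funext n
  congr 1
  refine tsum_congr fun Q => ?_
  have hset : {x : Config A d | ∀ (k : Fin n) (j : ↥L'), f^[(k : ℕ)] x (j : Zd d) = Q k j}
      = (Gmap f L' n) ⁻¹' {Q} := by
    ext x
    simp only [Set.mem_setOf_eq, Set.mem_preimage, Set.mem_singleton_iff, funext_iff]
    rfl
  rw [hset]

end Stmt16Aux

end MainHelpers

theorem stmt16 {d : ℕ} {A : Type*} [Fintype A] [TopologicalSpace A] [DiscreteTopology A]
    [MeasurableSpace A] [DiscreteMeasurableSpace A]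
    (X : Set (Config A d)) (hXcl : IsClosed X) (hXne : X.Nonempty)
    (hXinv : ∀ l : Zd d, ∀ x ∈ X, shift l x ∈ X)
    (f : Config A d → Config A d) (hf : Set.MapsTo f X X) (hfm : Measurable f)
    (I : Set (Zd d)) (hIfin : I.Finite)
    (F : (Zd d → A) → A)
    (hF : ∀ x ∈ X, ∀ j, f x j = F fun i => x (j + i))
    (hFloc : ∀ u v : Zd d → A, (∀ i ∈ I, u i = v i) → F u = F v)
    (J : Set (EuclideanSpace ℝ (Fin d))) (hJb : Bornology.IsBounded J) :
    (topPartEnt f X (latOf J) = topPartEnt f X (latOf (J \ erodeZ J I)) ∧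
      topPartEnt f X (latOf J) ≤ topPartEnt f X (latOf (dilateZ J I \ J))) ∧
    ∀ μ : Measure (Config A d), IsProbabilityMeasure μ → μ.map f = μ → μ X = 1 →
      measPartEnt μ f (latOf J) = measPartEnt μ f (latOf (J \ erodeZ J I)) ∧
      measPartEnt μ f (latOf J) ≤ measPartEnt μ f (latOf (dilateZ J I \ J)) := by
  classical
  obtain ⟨x₀, hx₀⟩ := hXne
  haveI : Nonempty A := ⟨x₀ 0⟩
  haveI : Inhabited A := Classical.inhabited_of_nonempty ‹_›
  set L := latOf J with hLdef
  set Lm := latOf (J \ erodeZ J I) with hLmdef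
  set Lp := latOf (dilateZ J I \ J) with hLpdef
  have hXne' : X.Nonempty := ⟨x₀, hx₀⟩
  have hLfin : L.Finite := Stmt16Aux.latOf_finite hJb
  have hLmL : Lm ⊆ L := fun z hz => hz.1
  have hLmfin : Lm.Finite := hLfin.subset hLmL
  have hLpfin : Lp.Finite := by
    have hsub : Lp ⊆ ⋃ i ∈ I, (fun z : Zd d => z + i) '' L := by
      intro z hz
      obtain ⟨x, hxJ, i, hiI, hxi⟩ := hz.1
      have hz1 : emb (z - i) = x := by
        have h2 : emb (z - i) + emb i = x + emb i := by
          rw [← Stmt16Aux.emb_add, sub_add_cancel]; exact hxi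
        exact add_right_cancel h2
      refine Set.mem_biUnion hiI ⟨z - i, ?_, sub_add_cancel z i⟩
      show emb (z - i) ∈ J
      rw [hz1]; exact hxJ
    exact (hIfin.biUnion (fun i _ => hLfin.image _)).subset hsub
  haveI : Fintype ↥L := hLfin.fintype
  haveI : Fintype ↥Lm := hLmfin.fintype
  haveI : Fintype ↥Lp := hLpfin.fintype
  have hfk : ∀ (k : ℕ), ∀ x ∈ X, f^[k] x ∈ X := by
    intro k
    induction k with
    | zero => intro x hx; simpa using hx
    | succ k ih => intro x hx; rw [Function.iterate_succ_apply']; exact hf (ih x hx)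
  -- one-step determinism, erosion version
  obtain ⟨stE, hstE⟩ : ∃ st : (↥L → A) → (↥Lm → A) → (↥L → A),
      ∀ x ∈ X, st (Stmt16Aux.resMap L x) (Stmt16Aux.resMap Lm (f x))
        = Stmt16Aux.resMap L (f x) := by
    refine ⟨fun r bb j => if h : (j : Zd d) ∈ Lm then bb ⟨j, h⟩
      else F (fun i => if h2 : i ∈ I ∧ (j : Zd d) + i ∈ L then r ⟨(j : Zd d) + i, h2.2⟩
        else default), ?_⟩
    intro x hx
    funext j
    by_cases h : (j : Zd d) ∈ Lm
    · simp only [h, dif_pos]; rfl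
    · simp only [h, dif_neg, not_false_iff]
      have hj : emb (j : Zd d) ∈ J := j.2
      have herode : emb (j : Zd d) ∈ erodeZ J I := by
        by_contra hc; exact h ⟨hj, hc⟩
      have hFx : Stmt16Aux.resMap L (f x) j = F (fun i => x ((j : Zd d) + i)) := hF x hx _
      rw [hFx]
      apply hFloc
      intro i hi
      have hmem : ((j : Zd d) + i) ∈ L := by
        show emb ((j : Zd d) + i) ∈ J
        rw [Stmt16Aux.emb_add]
        exact herode i hi
      rw [dif_pos ⟨hi, hmem⟩]
      rfl
  -- one-step determinism, dilation version
  obtain ⟨stD, hstD⟩ : ∃ st : (↥L → A) → (↥Lp → A) → (↥L → A),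
      ∀ x ∈ X, st (Stmt16Aux.resMap L x) (Stmt16Aux.resMap Lp x)
        = Stmt16Aux.resMap L (f x) := by
    refine ⟨fun r bb j => F (fun i => if hi : i ∈ I then
      (if hL2 : (j : Zd d) + i ∈ L then r ⟨(j : Zd d) + i, hL2⟩
        else if hP : (j : Zd d) + i ∈ Lp then bb ⟨(j : Zd d) + i, hP⟩ else default)
      else default), ?_⟩
    intro x hx
    funext j
    have hFx : Stmt16Aux.resMap L (f x) j = F (fun i => x ((j : Zd d) + i)) := hF x hx _
    show F _ = _
    rw [hFx]
    apply hFloc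
    intro i hi
    rw [dif_pos hi]
    by_cases hL2 : (j : Zd d) + i ∈ L
    · rw [dif_pos hL2]; rfl
    · rw [dif_neg hL2]
      have hdil : emb ((j : Zd d) + i) ∈ dilateZ J I :=
        ⟨emb (j : Zd d), j.2, i, hi, (Stmt16Aux.emb_add _ _)⟩
      have hP2 : (j : Zd d) + i ∈ Lp := ⟨hdil, hL2⟩
      rw [dif_pos hP2]
      rfl
  -- iterated determinism
  set PhiE : (↥L → A) → (ℕ → (↥Lm → A)) → ℕ → (↥L → A) :=
    fun r bb k => Nat.rec r (fun m prev => stE prev (bb (m + 1))) k with hPhiEdef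
  have hPhiE : ∀ x ∈ X, ∀ bb : ℕ → (↥Lm → A), ∀ k : ℕ,
      (∀ m ≤ k, bb m = Stmt16Aux.resMap Lm (f^[m] x)) →
      PhiE (Stmt16Aux.resMap L x) bb k = Stmt16Aux.resMap L (f^[k] x) := by
    intro x hx bb k
    induction k with
    | zero => intro _; simp only [Function.iterate_zero_apply]; rfl
    | succ k ih =>
      intro hbb
      have h1 : PhiE (Stmt16Aux.resMap L x) bb (k + 1)
          = stE (PhiE (Stmt16Aux.resMap L x) bb k) (bb (k + 1)) := rfl
      rw [h1, ih (fun m hm => hbb m (hm.trans (Nat.le_succ k))), hbb (k + 1) le_rfl,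
        Function.iterate_succ_apply']
      exact hstE (f^[k] x) (hfk k x hx)
  set PhiD : (↥L → A) → (ℕ → (↥Lp → A)) → ℕ → (↥L → A) :=
    fun r bb k => Nat.rec r (fun m prev => stD prev (bb m)) k with hPhiDdef
  have hPhiD : ∀ x ∈ X, ∀ bb : ℕ → (↥Lp → A), ∀ k : ℕ,
      (∀ m ≤ k, bb m = Stmt16Aux.resMap Lp (f^[m] x)) →
      PhiD (Stmt16Aux.resMap L x) bb k = Stmt16Aux.resMap L (f^[k] x) := by
    intro x hx bb k
    induction k with
    | zero => intro _; simp only [Function.iterate_zero_apply]; rfl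
    | succ k ih =>
      intro hbb
      have h1 : PhiD (Stmt16Aux.resMap L x) bb (k + 1)
          = stD (PhiD (Stmt16Aux.resMap L x) bb k) (bb k) := rfl
      rw [h1, ih (fun m hm => hbb m (hm.trans (Nat.le_succ k))), hbb k (Nat.le_succ k),
        Function.iterate_succ_apply']
      exact hstD (f^[k] x) (hfk k x hx)
  -- per-n reconstruction maps
  set ΦE : ∀ n : ℕ, (↥L → A) → (Fin n → ↥Lm → A) → (Fin n → ↥L → A) :=
    fun n r bb k => PhiE r (fun m => if h : m < n then bb ⟨m, h⟩ else default) (k : ℕ)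
    with hΦEdef
  have hcorrE : ∀ n : ℕ, ∀ x ∈ X,
      Stmt16Aux.Gmap f L n x = ΦE n (Stmt16Aux.resMap L x) (Stmt16Aux.Gmap f Lm n x) := by
    intro n x hx
    funext k
    have h2 := hPhiE x hx
      (fun m => if h : m < n then Stmt16Aux.Gmap f Lm n x ⟨m, h⟩ else default) (k : ℕ)
      (fun m hm => by
        have hmn : m < n := lt_of_le_of_lt hm k.2
        simp only [hmn, dif_pos]
        rfl)
    exact h2.symm
  set ΦD : ∀ n : ℕ, (↥L → A) → (Fin n → ↥Lp → A) → (Fin n → ↥L → A) :=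
    fun n r bb k => PhiD r (fun m => if h : m < n then bb ⟨m, h⟩ else default) (k : ℕ)
    with hΦDdef
  have hcorrD : ∀ n : ℕ, ∀ x ∈ X,
      Stmt16Aux.Gmap f L n x = ΦD n (Stmt16Aux.resMap L x) (Stmt16Aux.Gmap f Lp n x) := by
    intro n x hx
    funext k
    have h2 := hPhiD x hx
      (fun m => if h : m < n then Stmt16Aux.Gmap f Lp n x ⟨m, h⟩ else default) (k : ℕ)
      (fun m hm => by
        have hmn : m < n := lt_of_le_of_lt hm k.2
        simp only [hmn, dif_pos]
        rfl)
    exact h2.symm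
  -- restriction maps as compositions
  have hrestE : ∀ n : ℕ, ∀ x : Config A d, Stmt16Aux.Gmap f Lm n x
      = (fun (Q : Fin n → ↥L → A) (k : Fin n) (j : ↥Lm) => Q k ⟨(j : Zd d), hLmL j.2⟩)
        (Stmt16Aux.Gmap f L n x) := fun n x => rfl
  -- topological part
  have topcards : ∀ n : ℕ,
      (Nat.card ((Stmt16Aux.Gmap f L n) '' X) ≤
        Nat.card (↥L → A) * Nat.card ((Stmt16Aux.Gmap f Lm n) '' X)) ∧
      (Nat.card ((Stmt16Aux.Gmap f Lm n) '' X) ≤ Nat.card ((Stmt16Aux.Gmap f L n) '' X)) ∧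
      (Nat.card ((Stmt16Aux.Gmap f L n) '' X) ≤
        Nat.card (↥L → A) * Nat.card ((Stmt16Aux.Gmap f Lp n) '' X)) := by
    intro n
    refine ⟨?_, ?_, ?_⟩
    · exact Stmt16Aux.card_image_le_mul X (Stmt16Aux.Gmap f L n) (Stmt16Aux.resMap L)
        (Stmt16Aux.Gmap f Lm n) (ΦE n) (fun x hx => hcorrE n x hx) (Set.toFinite _)
    · exact Stmt16Aux.card_image_le_of_comp X (Stmt16Aux.Gmap f L n) (Stmt16Aux.Gmap f Lm n)
        (fun Q k j => Q k ⟨(j : Zd d), hLmL j.2⟩) (fun x _ => hrestE n x) (Set.toFinite _)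
    · exact Stmt16Aux.card_image_le_mul X (Stmt16Aux.Gmap f L n) (Stmt16Aux.resMap L)
        (Stmt16Aux.Gmap f Lp n) (ΦD n) (fun x hx => hcorrD n x hx) (Set.toFinite _)
  -- positivity and growth bounds for log-card sequences
  have cardpos : ∀ (L' : Set (Zd d)), L'.Finite → ∀ n : ℕ,
      (0 : ℕ) < Nat.card ((Stmt16Aux.Gmap f L' n) '' X) := by
    intro L' hfin n
    haveI := hfin.to_subtype
    haveI : Nonempty ↥((Stmt16Aux.Gmap f L' n) '' X) := (hXne'.image _).to_subtype
    haveI : Finite ↥((Stmt16Aux.Gmap f L' n) '' X) := (Set.toFinite _).to_subtype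
    exact Nat.card_pos
  have loggrowth : ∀ (L' : Set (Zd d)), L'.Finite → ∃ K : ℝ, ∀ n : ℕ,
      Real.log (Nat.card ((Stmt16Aux.Gmap f L' n) '' X)) ≤ K * n := by
    intro L' hfin
    haveI := hfin.fintype
    refine ⟨Real.log (Fintype.card (↥L' → A)), fun n => ?_⟩
    have h1 : Nat.card ↥((Stmt16Aux.Gmap f L' n) '' X) ≤ Nat.card (Fin n → ↥L' → A) := by
      haveI : Finite ↥((Stmt16Aux.Gmap f L' n) '' X) := (Set.toFinite _).to_subtype
      exact Nat.card_le_card_of_injective Subtype.val Subtype.val_injective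
    have h2 : Nat.card (Fin n → ↥L' → A) = Fintype.card (↥L' → A) ^ n := by
      rw [Nat.card_eq_fintype_card, Fintype.card_fun, Fintype.card_fin]
    have h3 : Real.log (Nat.card ((Stmt16Aux.Gmap f L' n) '' X))
        ≤ Real.log (((Fintype.card (↥L' → A) : ℕ) ^ n : ℕ)) := by
      apply Real.log_le_log
      · exact_mod_cast cardpos L' hfin n
      · exact_mod_cast h2 ▸ h1
    calc Real.log (Nat.card ((Stmt16Aux.Gmap f L' n) '' X))
        ≤ Real.log ((Fintype.card (↥L' → A) : ℝ) ^ n) := by rwa [Nat.cast_pow] at h3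
      _ = n * Real.log (Fintype.card (↥L' → A)) := Real.log_pow _ _
      _ = Real.log (Fintype.card (↥L' → A)) * n := mul_comm _ _
  have lognonneg : ∀ (L' : Set (Zd d)), L'.Finite → ∀ n : ℕ,
      0 ≤ Real.log (Nat.card ((Stmt16Aux.Gmap f L' n) '' X)) := by
    intro L' hfin n
    apply Real.log_nonneg
    exact_mod_cast cardpos L' hfin n
  -- the additive constant
  set C : ℝ := Real.log (Nat.card (↥L → A)) with hCdef
  have hCpos : 0 < Nat.card (↥L → A) := Nat.card_pos
  have hlogmul : ∀ n : ℕ, ∀ c2 : ℕ, 0 < c2 →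
      Real.log ((Nat.card (↥L → A) * c2 : ℕ)) = C + Real.log c2 := by
    intro n c2 hc2
    rw [Nat.cast_mul, Real.log_mul (by exact_mod_cast hCpos.ne') (by exact_mod_cast hc2.ne')]
  obtain ⟨KL, hKL⟩ := loggrowth L hLfin
  obtain ⟨KLm, hKLm⟩ := loggrowth Lm hLmfin
  obtain ⟨KLp, hKLp⟩ := loggrowth Lp hLpfin
  have habE : ∀ n : ℕ, Real.log (Nat.card ((Stmt16Aux.Gmap f L n) '' X))
      ≤ C + Real.log (Nat.card ((Stmt16Aux.Gmap f Lm n) '' X)) := by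
    intro n
    have h1 := (topcards n).1
    have h2 : Real.log (Nat.card ((Stmt16Aux.Gmap f L n) '' X))
        ≤ Real.log ((Nat.card (↥L → A) * Nat.card ((Stmt16Aux.Gmap f Lm n) '' X) : ℕ)) := by
      apply Real.log_le_log
      · exact_mod_cast cardpos L hLfin n
      · exact_mod_cast h1
    rwa [hlogmul n _ (cardpos Lm hLmfin n)] at h2
  have habD : ∀ n : ℕ, Real.log (Nat.card ((Stmt16Aux.Gmap f L n) '' X))
      ≤ C + Real.log (Nat.card ((Stmt16Aux.Gmap f Lp n) '' X)) := by
    intro n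
    have h1 := (topcards n).2.2
    have h2 : Real.log (Nat.card ((Stmt16Aux.Gmap f L n) '' X))
        ≤ Real.log ((Nat.card (↥L → A) * Nat.card ((Stmt16Aux.Gmap f Lp n) '' X) : ℕ)) := by
      apply Real.log_le_log
      · exact_mod_cast cardpos L hLfin n
      · exact_mod_cast h1
    rwa [hlogmul n _ (cardpos Lp hLpfin n)] at h2
  have habM : ∀ n : ℕ, Real.log (Nat.card ((Stmt16Aux.Gmap f Lm n) '' X))
      ≤ Real.log (Nat.card ((Stmt16Aux.Gmap f L n) '' X)) := by
    intro n
    apply Real.log_le_log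
    · exact_mod_cast cardpos Lm hLmfin n
    · exact_mod_cast (topcards n).2.1
  constructor
  · constructor
    · rw [Stmt16Aux.topPartEnt_eq f X L, Stmt16Aux.topPartEnt_eq f X Lm]
      apply le_antisymm
      · exact Stmt16Aux.limsup_div_le (lognonneg L hLfin) (lognonneg Lm hLmfin) habE hKLm
      · exact Stmt16Aux.limsup_div_mono (lognonneg Lm hLmfin) (lognonneg L hLfin) habM hKL
    · rw [Stmt16Aux.topPartEnt_eq f X L, Stmt16Aux.topPartEnt_eq f X Lp]
      exact Stmt16Aux.limsup_div_le (lognonneg L hLfin) (lognonneg Lp hLpfin) habD hKLp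
  -- measure part
  intro μ hμprob hμinv hμX
  haveI := hμprob
  have hXm : MeasurableSet X := hXcl.measurableSet
  -- measurability of the observation maps
  have hGmeas : ∀ (L' : Set (Zd d)), L'.Finite → ∀ (n : ℕ) (Q : Fin n → ↥L' → A),
      MeasurableSet ((Stmt16Aux.Gmap f L' n) ⁻¹' {Q}) := by
    intro L' hfin n Q
    haveI := hfin.to_subtype
    have hset : (Stmt16Aux.Gmap f L' n) ⁻¹' {Q}
        = ⋂ (k : Fin n), ⋂ (j : ↥L'),
            (fun x : Config A d => f^[(k : ℕ)] x (j : Zd d)) ⁻¹' {Q k j} := by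
      ext x
      simp only [Set.mem_preimage, Set.mem_singleton_iff, Set.mem_iInter, funext_iff]
      rfl
    rw [hset]
    exact MeasurableSet.iInter fun k => MeasurableSet.iInter fun j =>
      ((measurable_pi_apply _).comp (hfm.iterate _)) (MeasurableSet.of_discrete)
  have hresmeas : ∀ (r : ↥L → A), MeasurableSet ((Stmt16Aux.resMap L) ⁻¹' {r}) := by
    intro r
    have hset : (Stmt16Aux.resMap L) ⁻¹' {r}
        = ⋂ (j : ↥L), (fun x : Config A d => x (j : Zd d)) ⁻¹' {r j} := by
      ext x
      simp only [Set.mem_preimage, Set.mem_singleton_iff, Set.mem_iInter, funext_iff]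
      rfl
    rw [hset]
    exact MeasurableSet.iInter fun j => (measurable_pi_apply _) (MeasurableSet.of_discrete)
  have hpairmeasE : ∀ (n : ℕ) (p : (↥L → A) × (Fin n → ↥Lm → A)),
      MeasurableSet ((fun x => (Stmt16Aux.resMap L x, Stmt16Aux.Gmap f Lm n x)) ⁻¹' {p}) := by
    intro n p
    have hset : (fun x => (Stmt16Aux.resMap L x, Stmt16Aux.Gmap f Lm n x)) ⁻¹' {p}
        = (Stmt16Aux.resMap L) ⁻¹' {p.1} ∩ (Stmt16Aux.Gmap f Lm n) ⁻¹' {p.2} := by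
      ext x
      simp [Prod.ext_iff]
    rw [hset]
    exact (hresmeas p.1).inter (hGmeas Lm hLmfin n p.2)
  have hpairmeasD : ∀ (n : ℕ) (p : (↥L → A) × (Fin n → ↥Lp → A)),
      MeasurableSet ((fun x => (Stmt16Aux.resMap L x, Stmt16Aux.Gmap f Lp n x)) ⁻¹' {p}) := by
    intro n p
    have hset : (fun x => (Stmt16Aux.resMap L x, Stmt16Aux.Gmap f Lp n x)) ⁻¹' {p}
        = (Stmt16Aux.resMap L) ⁻¹' {p.1} ∩ (Stmt16Aux.Gmap f Lp n) ⁻¹' {p.2} := by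
      ext x
      simp [Prod.ext_iff]
    rw [hset]
    exact (hresmeas p.1).inter (hGmeas Lp hLpfin n p.2)
  -- entropy inequalities
  have hCC : Real.log (Fintype.card (↥L → A)) = C := by
    rw [hCdef, Nat.card_eq_fintype_card]
  have hmE : ∀ n : ℕ, Stmt16Aux.Hm μ (Stmt16Aux.Gmap f L n)
      ≤ C + Stmt16Aux.Hm μ (Stmt16Aux.Gmap f Lm n) := by
    intro n
    have step1 : Stmt16Aux.Hm μ (Stmt16Aux.Gmap f L n)
        ≤ Stmt16Aux.Hm μ (fun x => (Stmt16Aux.resMap L x, Stmt16Aux.Gmap f Lm n x)) :=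
      Stmt16Aux.Hm_comp_le μ _ _ (fun p => ΦE n p.1 p.2) (hpairmeasE n) X hXm hμX
        (fun x hx => hcorrE n x hx)
    have step2 : Stmt16Aux.Hm μ (fun x => (Stmt16Aux.resMap L x, Stmt16Aux.Gmap f Lm n x))
        ≤ Real.log (Fintype.card (↥L → A)) + Stmt16Aux.Hm μ (Stmt16Aux.Gmap f Lm n) :=
      Stmt16Aux.Hm_pair_le μ _ _ hresmeas (hGmeas Lm hLmfin n)
    rw [hCC] at step2
    linarith
  have hmD : ∀ n : ℕ, Stmt16Aux.Hm μ (Stmt16Aux.Gmap f L n)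
      ≤ C + Stmt16Aux.Hm μ (Stmt16Aux.Gmap f Lp n) := by
    intro n
    have step1 : Stmt16Aux.Hm μ (Stmt16Aux.Gmap f L n)
        ≤ Stmt16Aux.Hm μ (fun x => (Stmt16Aux.resMap L x, Stmt16Aux.Gmap f Lp n x)) :=
      Stmt16Aux.Hm_comp_le μ _ _ (fun p => ΦD n p.1 p.2) (hpairmeasD n) X hXm hμX
        (fun x hx => hcorrD n x hx)
    have step2 : Stmt16Aux.Hm μ (fun x => (Stmt16Aux.resMap L x, Stmt16Aux.Gmap f Lp n x))
        ≤ Real.log (Fintype.card (↥L → A)) + Stmt16Aux.Hm μ (Stmt16Aux.Gmap f Lp n) :=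
      Stmt16Aux.Hm_pair_le μ _ _ hresmeas (hGmeas Lp hLpfin n)
    rw [hCC] at step2
    linarith
  have hmM : ∀ n : ℕ, Stmt16Aux.Hm μ (Stmt16Aux.Gmap f Lm n)
      ≤ Stmt16Aux.Hm μ (Stmt16Aux.Gmap f L n) := by
    intro n
    exact Stmt16Aux.Hm_comp_le μ _ _
      (fun (Q : Fin n → ↥L → A) (k : Fin n) (j : ↥Lm) => Q k ⟨(j : Zd d), hLmL j.2⟩)
      (hGmeas L hLfin n) Set.univ MeasurableSet.univ (by simp) (fun x _ => hrestE n x)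
  -- bounds
  have hmgrowth : ∀ (L' : Set (Zd d)) (hfin : L'.Finite), ∃ K : ℝ, ∀ n : ℕ,
      Stmt16Aux.Hm μ (Stmt16Aux.Gmap f L' n) ≤ K * n := by
    intro L' hfin
    haveI := hfin.fintype
    refine ⟨Real.log (Fintype.card (↥L' → A)), fun n => ?_⟩
    have h1 := Stmt16Aux.Hm_le_log_card μ (Stmt16Aux.Gmap f L' n) (hGmeas L' hfin n)
    have h2 : (Fintype.card (Fin n → ↥L' → A) : ℝ) = (Fintype.card (↥L' → A) : ℝ) ^ n := by
      rw [Fintype.card_fun, Fintype.card_fin]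
      push_cast
      ring
    rw [h2, Real.log_pow] at h1
    calc Stmt16Aux.Hm μ (Stmt16Aux.Gmap f L' n) ≤ n * Real.log (Fintype.card (↥L' → A)) := h1
      _ = Real.log (Fintype.card (↥L' → A)) * n := mul_comm _ _
  obtain ⟨ML, hML⟩ := hmgrowth L hLfin
  obtain ⟨MLm, hMLm⟩ := hmgrowth Lm hLmfin
  obtain ⟨MLp, hMLp⟩ := hmgrowth Lp hLpfin
  have hm0 : ∀ (L' : Set (Zd d)) (hfin : L'.Finite) (n : ℕ),
      0 ≤ Stmt16Aux.Hm μ (Stmt16Aux.Gmap f L' n) := by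
    intro L' hfin n
    haveI := hfin.fintype
    exact Stmt16Aux.Hm_nonneg μ _
  -- rewrite the goal to Hm sequences
  have hrw : ∀ (L' : Set (Zd d)), L'.Finite → measPartEnt μ f L'
      = limsup (fun n : ℕ => Stmt16Aux.Hm μ (Stmt16Aux.Gmap f L' n) / n) atTop := by
    intro L' hfin
    rw [Stmt16Aux.measPartEnt_eq μ f L']
    rfl
  rw [hrw L hLfin, hrw Lm hLmfin, hrw Lp hLpfin]
  constructor
  · apply le_antisymm
    · exact Stmt16Aux.limsup_div_le (hm0 L hLfin) (hm0 Lm hLmfin) hmE hMLm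
    · exact Stmt16Aux.limsup_div_mono (hm0 Lm hLmfin) (hm0 L hLfin) hmM hML
  · exact Stmt16Aux.limsup_div_le (hm0 L hLfin) (hm0 Lp hLpfin) hmD hMLp
end

section
/- Let f be a cellular automaton on 𝒜^{ℤ^d} that is permutative (permutative at every nonzero extreme point of the convex hull 𝕀 of I ∪ {0}, where I is its domain). Then for every k ≥ 1, f^k is permutative and the convex hull 𝕀_k of I_k ∪ {0} (I_k the domain of f^k) equals k𝕀. -/
open Set Filter Pointwise

/-- `g` admits `S` as a memory set: the value of `g x` at `j` only depends on the
coordinates of `x` on `j + S`. -/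
def HasRule {A : Type*} {d : ℕ} (g : Config A d → Config A d) (S : Set (Zd d)) : Prop :=
  ∀ x y : Config A d, ∀ j : Zd d, (∀ i ∈ S, x (j + i) = y (j + i)) → g x j = g y j

/-- `S` is the (smallest) domain of the cellular automaton `g`. -/
def IsCADomain {A : Type*} {d : ℕ} (g : Config A d → Config A d) (S : Set (Zd d)) : Prop :=
  HasRule g S ∧ ∀ T : Set (Zd d), HasRule g T → S ⊆ T

/-- The local rule `F` is permutative at `z`: for every pattern off `z` and every target
letter `a` there is a letter `b` completing the pattern at `z` with output `a`. -/
def PermutativeAt {A : Type*} {d : ℕ} (F : (Zd d → A) → A) (z : Zd d) : Prop :=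
  ∀ u : Zd d → A, ∀ a : A, ∃ b : A, F (Function.update u z b) = a

/-!
The local rule of `f^[k]` is the iterate `iterRule F k`, which only reads the `k`-fold sumset of
`I`; so the domain `I_k` of `f^[k]` lies in that sumset, and `conv (I_k ∪ {0}) ⊆ k 𝕀`.
Conversely, if `z` is a nonzero extreme point of `𝕀`, the only way to write `k z` as a sum of `k`
points of `I` is `z + ⋯ + z`; hence permutativity of `F` at `z` propagates to permutativity of
`iterRule F k` at `k z`. A rule permutative at a point must read it (the alphabet being
nontrivial), so `k z ∈ I_k`. As `k 𝕀` is the hull of the points `k z` (Krein–Milman), the two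
hulls agree, and the nonzero extreme points of `𝕀_k = k 𝕀` are exactly these `k z`.
-/

section Embedding

variable {d : ℕ}

@[simp]
lemma emb_apply (z : Zd d) (i : Fin d) : emb z i = (z i : ℝ) := rfl

@[simp]
lemma emb_zero : emb (0 : Zd d) = 0 := by ext; simp

lemma emb_add (a b : Zd d) : emb (a + b) = emb a + emb b := by ext; simp

lemma emb_nsmul (k : ℕ) (z : Zd d) : emb (k • z) = (k : ℝ) • emb z := by ext; simp

lemma emb_injective : Function.Injective (emb (d := d)) := fun a b h =>
  funext fun i => by simpa using congrArg (fun v => v i) h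

end Embedding

section Convex

variable {E : Type*} [AddCommGroup E] [Module ℝ E]

lemma eq_of_add_smul_eq_smul_of_mem_extremePoints {C : Set E} {e x p : E} {t : ℝ}
    (he : e ∈ C.extremePoints ℝ) (hx : x ∈ C) (hp : p ∈ C) (ht : 0 ≤ t)
    (hsum : x + t • p = (1 + t) • e) : x = e := by
  rcases ht.eq_or_lt with rfl | ht
  · simpa using hsum
  have ht1 : 0 < 1 + t := by linarith
  refine ((mem_extremePoints.1 he).2 x hx p hp
    ⟨(1 + t)⁻¹, t / (1 + t), by positivity, by positivity, by field_simp, ?_⟩).1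
  rw [div_eq_inv_mul, ← smul_smul, ← smul_add, hsum, smul_smul, inv_mul_cancel₀ ht1.ne', one_smul]

lemma extremePoints_smul {t : ℝ} (ht : t ≠ 0) (s : Set E) :
    (t • s).extremePoints ℝ = t • s.extremePoints ℝ := by
  simpa only [LinearEquiv.smulOfNeZero_apply, Set.image_smul] using
    (image_extremePoints (LinearEquiv.smulOfNeZero ℝ E t ht) s).symm

variable [TopologicalSpace E] [IsTopologicalAddGroup E] [ContinuousSMul ℝ E] [T2Space E]
  [LocallyConvexSpace ℝ E]

lemma Set.Finite.convexHull_extremePoints_convexHull_s17 {S : Set E} (hS : S.Finite) :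
    convexHull ℝ ((convexHull ℝ S).extremePoints ℝ) = convexHull ℝ S := by
  have hE : ((convexHull ℝ S).extremePoints ℝ).Finite := hS.subset extremePoints_convexHull_subset
  rw [← (hE.isClosed_convexHull ℝ).closure_eq]
  exact closure_convexHull_extremePoints (hS.isCompact_convexHull ℝ) (convex_convexHull ℝ S)

lemma convexHull_eq_smul_convexHull {S T : Set E} (hS : S.Finite) {t : ℝ}
    (hext : t • (convexHull ℝ S).extremePoints ℝ ⊆ T) (hT : T ⊆ t • convexHull ℝ S) :
    convexHull ℝ T = t • convexHull ℝ S := by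
  refine (convexHull_min hT ((convex_convexHull ℝ S).smul t)).antisymm ?_
  rw [← hS.convexHull_extremePoints_convexHull_s17, ← convexHull_smul]
  exact convexHull_mono hext

end Convex

section Rules

variable {d : ℕ} {A : Type*}

lemma HasRule.inter {g : Config A d → Config A d} {S T : Set (Zd d)}
    (hS : HasRule g S) (hT : HasRule g T) : HasRule g (S ∩ T) := by
  classical
  intro x y j h
  -- `z` agrees with `x` on `j + S` and with `y` on `j + T`
  let z : Config A d := fun n => if n - j ∈ S then x n else y n
  have hxz : g x j = g z j := hS x z j fun i hi => by simp [z, hi]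
  have hzy : g z j = g y j := hT z y j fun i hi => by
    by_cases hiS : i ∈ S
    · simpa [z, hiS] using h i ⟨hiS, hi⟩
    · simp [z, hiS]
  exact hxz.trans hzy

lemma HasRule.exists_isCADomain_subset {g : Config A d → Config A d} {S : Set (Zd d)}
    (hS : HasRule g S) (hfin : S.Finite) : ∃ T ⊆ S, IsCADomain g T := by
  obtain ⟨T, ⟨hTS, hT⟩, hmin⟩ :=
    (hfin.finite_subsets.subset fun T hT => hT.1 : {T | T ⊆ S ∧ HasRule g T}.Finite).exists_minimal
      ⟨S, subset_rfl, hS⟩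
  refine ⟨T, hTS, hT, fun T' hT' => ?_⟩
  have := hmin ⟨Set.inter_subset_left.trans hTS, hT.inter hT'⟩ Set.inter_subset_left
  exact fun i hi => (this hi).2

lemma HasRule.congr_of_apply_eq {g : Config A d → Config A d} {G : (Zd d → A) → A}
    (hgG : ∀ x j, g x j = G fun i => x (j + i)) {S : Set (Zd d)} (hS : HasRule g S)
    (u v : Zd d → A) (huv : ∀ i ∈ S, u i = v i) : G u = G v := by
  simpa [hgG] using hS u v 0 (by simpa using huv)

lemma PermutativeAt.mem_of_hasRule [Nontrivial A] {g : Config A d → Config A d}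
    {G : (Zd d → A) → A} (hgG : ∀ x j, g x j = G fun i => x (j + i)) {w : Zd d}
    (hG : PermutativeAt G w) {T : Set (Zd d)} (hT : HasRule g T) : w ∈ T := by
  classical
  by_contra hw
  obtain ⟨a, a', haa'⟩ := exists_pair_ne A
  obtain ⟨b, hb⟩ := hG (fun _ => a) a
  obtain ⟨b', hb'⟩ := hG (fun _ => a) a'
  have hne : ∀ i ∈ T, i ≠ w := fun i hi => ne_of_mem_of_not_mem hi hw
  have := hT.congr_of_apply_eq hgG (Function.update (fun _ => a) w b)
    (Function.update (fun _ => a) w b') fun i hi => by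
      rw [Function.update_of_ne (hne i hi), Function.update_of_ne (hne i hi)]
  exact haa' (hb.symm.trans (this.trans hb'))

end Rules

section Iterates

variable {d : ℕ} {A : Type*}

def iterRule (F : (Zd d → A) → A) : ℕ → (Zd d → A) → A
  | 0 => fun u => u 0
  | k + 1 => fun u => F fun i => iterRule F k fun j => u (i + j)

def sumSet (I : Set (Zd d)) : ℕ → Set (Zd d)
  | 0 => {0}
  | k + 1 => I + sumSet I k

lemma Set.Finite.sumSet {I : Set (Zd d)} (hI : I.Finite) : ∀ k, (sumSet I k).Finite
  | 0 => Set.finite_singleton 0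
  | k + 1 => hI.add (hI.sumSet k)

lemma iterate_apply_eq_iterRule {f : Config A d → Config A d} {F : (Zd d → A) → A}
    (hF : ∀ x j, f x j = F fun i => x (j + i)) :
    ∀ k x j, f^[k] x j = iterRule F k fun i => x (j + i)
  | 0, x, j => by simp [iterRule]
  | k + 1, x, j => by
    simp only [Function.iterate_succ_apply', hF, iterate_apply_eq_iterRule hF k, iterRule,
      add_assoc]

lemma iterRule_congr {I : Set (Zd d)} {F : (Zd d → A) → A}
    (hF : ∀ u v : Zd d → A, (∀ i ∈ I, u i = v i) → F u = F v) :
    ∀ k (u v : Zd d → A), (∀ i ∈ sumSet I k, u i = v i) → iterRule F k u = iterRule F k v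
  | 0, _, _, h => h 0 rfl
  | k + 1, _, _, h => hF _ _ fun i hi =>
    iterRule_congr hF k _ _ fun j hj => h (i + j) (Set.add_mem_add hi hj)

lemma hasRule_iterate_sumSet {f : Config A d → Config A d} {F : (Zd d → A) → A}
    (hF : ∀ x j, f x j = F fun i => x (j + i)) {I : Set (Zd d)}
    (hFloc : ∀ u v : Zd d → A, (∀ i ∈ I, u i = v i) → F u = F v) (k : ℕ) :
    HasRule (f^[k]) (sumSet I k) := fun x y j h => by
  rw [iterate_apply_eq_iterRule hF, iterate_apply_eq_iterRule hF]
  exact iterRule_congr hFloc k _ _ h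

lemma emb_mem_smul_convexHull {I : Set (Zd d)} :
    ∀ k, ∀ w ∈ sumSet I k, emb w ∈ (k : ℝ) • convexHull ℝ (emb '' (I ∪ {0}))
  | 0, w, hw => by
    rw [Set.mem_singleton_iff.1 hw, emb_zero, Nat.cast_zero]
    exact Set.zero_mem_smul_set (subset_convexHull ℝ _ ⟨0, Or.inr rfl, emb_zero⟩)
  | k + 1, _, ⟨i, hi, j, hj, rfl⟩ => by
    rw [emb_add, Nat.cast_succ, add_comm, Convex.add_smul (convex_convexHull ℝ _) zero_le_one
      k.cast_nonneg, one_smul]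
    exact Set.add_mem_add (subset_convexHull ℝ _ ⟨i, Or.inl hi, rfl⟩)
      (emb_mem_smul_convexHull k j hj)

lemma eq_of_add_eq_succ_nsmul {I : Set (Zd d)} {z i j : Zd d} {k : ℕ}
    (hz : emb z ∈ (convexHull ℝ (emb '' (I ∪ {0}))).extremePoints ℝ)
    (hi : i ∈ I) (hj : j ∈ sumSet I k) (hij : i + j = (k + 1) • z) : i = z := by
  obtain ⟨p, hp, hpj⟩ := emb_mem_smul_convexHull k j hj
  refine emb_injective (eq_of_add_smul_eq_smul_of_mem_extremePoints hz
    (subset_convexHull ℝ _ ⟨i, Or.inl hi, rfl⟩) hp k.cast_nonneg ?_)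
  rw [show (k : ℝ) • p = emb j from hpj, ← emb_add, hij, emb_nsmul, Nat.cast_succ, add_comm]

end Iterates

section Permutative

variable {d : ℕ} {A : Type*} {I : Set (Zd d)} {F : (Zd d → A) → A}

lemma permutativeAt_iterRule_nsmul
    (hFloc : ∀ u v : Zd d → A, (∀ i ∈ I, u i = v i) → F u = F v) {z : Zd d}
    (hz : emb z ∈ (convexHull ℝ (emb '' (I ∪ {0}))).extremePoints ℝ) (hF : PermutativeAt F z) :
    ∀ k, PermutativeAt (iterRule F k) (k • z)
  | 0 => fun u a => ⟨a, by simp [iterRule]⟩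
  | k + 1 => fun u a => by
    classical
    -- `c` is the letter the `k`-th iterate must produce at `z`, and `b`, placed at `(k + 1) • z`,
    -- makes it do so; among the inputs of the outer rule, only the one at `z` reads that cell
    obtain ⟨c, hc⟩ := hF (fun i => iterRule F k fun j => u (i + j)) a
    obtain ⟨b, hb⟩ := permutativeAt_iterRule_nsmul hFloc hz hF k (fun j => u (z + j)) c
    refine ⟨b, hc ▸ hFloc _ _ fun i hi => ?_⟩
    rcases eq_or_ne i z with rfl | hiz
    · rw [Function.update_self, ← hb]
      congr 1
      funext j
      simp only [Function.update_apply, succ_nsmul', add_right_inj]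
    · rw [Function.update_of_ne hiz]
      refine iterRule_congr hFloc k _ _ fun j hj => Function.update_of_ne ?_ _ _
      exact fun hij => hiz (eq_of_add_eq_succ_nsmul hz hi hj hij)

lemma permutativeAt_iterRule_of_mem_extremePoints_smul
    (hFloc : ∀ u v : Zd d → A, (∀ i ∈ I, u i = v i) → F u = F v)
    (hperm : ∀ z : Zd d, z ≠ 0 →
      emb z ∈ (convexHull ℝ (emb '' (I ∪ {0}))).extremePoints ℝ → PermutativeAt F z)
    {k : ℕ} (hk : 1 ≤ k) {w : Zd d} (hw : w ≠ 0)
    (hext : emb w ∈ ((k : ℝ) • convexHull ℝ (emb '' (I ∪ {0}))).extremePoints ℝ) :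
    PermutativeAt (iterRule F k) w := by
  rw [extremePoints_smul (by positivity)] at hext
  obtain ⟨_, he, hwe⟩ := hext
  obtain ⟨z, -, rfl⟩ := extremePoints_convexHull_subset he
  obtain rfl : w = k • z := emb_injective (by rw [emb_nsmul]; exact hwe.symm)
  exact permutativeAt_iterRule_nsmul hFloc he (hperm z (by rintro rfl; simp at hw) he) k

end Permutative

theorem stmt17_general {d : ℕ} {A : Type*}
    (f : Config A d → Config A d)
    (I : Set (Zd d)) (hIfin : I.Finite) (hdom : IsCADomain f I)
    (F : (Zd d → A) → A)
    (hF : ∀ x : Config A d, ∀ j : Zd d, f x j = F fun i => x (j + i))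
    (hFloc : ∀ u v : Zd d → A, (∀ i ∈ I, u i = v i) → F u = F v)
    -- `f` is permutative: permutative at every nonzero extreme point of `𝕀 = conv(I ∪ {0})`
    (hperm : ∀ z : Zd d, z ≠ 0 →
      emb z ∈ Set.extremePoints ℝ (convexHull ℝ (emb '' (I ∪ {0}))) → PermutativeAt F z) :
    ∀ k : ℕ, 1 ≤ k →
      ∃ (Ik : Set (Zd d)) (Fk : (Zd d → A) → A),
        Ik.Finite ∧ IsCADomain (f^[k]) Ik ∧
        (∀ x : Config A d, ∀ j : Zd d, f^[k] x j = Fk fun i => x (j + i)) ∧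
        (∀ u v : Zd d → A, (∀ i ∈ Ik, u i = v i) → Fk u = Fk v) ∧
        (∀ z : Zd d, z ≠ 0 →
          emb z ∈ Set.extremePoints ℝ (convexHull ℝ (emb '' (Ik ∪ {0}))) →
          PermutativeAt Fk z) ∧
        convexHull ℝ (emb '' (Ik ∪ {0})) = (k : ℝ) • convexHull ℝ (emb '' (I ∪ {0})) := by
  intro k hk
  obtain ⟨Ik, hIkS, hIk⟩ :=
    (hasRule_iterate_sumSet hF hFloc k).exists_isCADomain_subset (hIfin.sumSet k)
  have hFk := iterate_apply_eq_iterRule hF k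
  have h0 : (0 : EuclideanSpace ℝ (Fin d)) ∈ (k : ℝ) • convexHull ℝ (emb '' (I ∪ {0})) :=
    Set.zero_mem_smul_set (subset_convexHull ℝ _ ⟨0, Or.inr rfl, emb_zero⟩)
  have hhull : convexHull ℝ (emb '' (Ik ∪ {0})) = (k : ℝ) • convexHull ℝ (emb '' (I ∪ {0})) := by
    refine convexHull_eq_smul_convexHull ((hIfin.union (Set.finite_singleton 0)).image emb) ?_ ?_
    · rintro _ ⟨_, he, rfl⟩
      obtain ⟨z, hz, rfl⟩ := extremePoints_convexHull_subset he
      rcases eq_or_ne z 0 with rfl | hz0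
      · exact ⟨0, Or.inr rfl, by simp⟩
      refine ⟨k • z, Or.inl ?_, emb_nsmul k z⟩
      rcases subsingleton_or_nontrivial A with _ | _
      · exact (hdom.2 ∅ (fun _ _ _ _ => Subsingleton.elim _ _) (hz.resolve_right hz0)).elim
      · exact (permutativeAt_iterRule_nsmul hFloc he (hperm z hz0 he) k).mem_of_hasRule hFk hIk.1
    · rintro _ ⟨w, hw | rfl, rfl⟩
      exacts [emb_mem_smul_convexHull k w (hIkS hw), emb_zero (d := d) ▸ h0]
  refine ⟨Ik, iterRule F k, (hIfin.sumSet k).subset hIkS, hIk, hFk,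
    hIk.1.congr_of_apply_eq hFk, fun w hw hext => ?_, hhull⟩
  rw [hhull] at hext
  exact permutativeAt_iterRule_of_mem_extremePoints_smul hFloc hperm hk hw hext

theorem stmt17 {d : ℕ} {A : Type*} [Fintype A] [Nonempty A]
    (f : Config A d → Config A d)
    (hcomm : ∀ l : Zd d, ∀ x, f (shift l x) = shift l (f x))
    (I : Set (Zd d)) (hIfin : I.Finite) (hdom : IsCADomain f I)
    (F : (Zd d → A) → A)
    (hF : ∀ x : Config A d, ∀ j : Zd d, f x j = F fun i => x (j + i))
    (hFloc : ∀ u v : Zd d → A, (∀ i ∈ I, u i = v i) → F u = F v)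
    -- `f` is permutative: permutative at every nonzero extreme point of `𝕀 = conv(I ∪ {0})`
    (hperm : ∀ z : Zd d, z ≠ 0 →
      emb z ∈ Set.extremePoints ℝ (convexHull ℝ (emb '' (I ∪ {0}))) → PermutativeAt F z) :
    ∀ k : ℕ, 1 ≤ k →
      ∃ (Ik : Set (Zd d)) (Fk : (Zd d → A) → A),
        Ik.Finite ∧ IsCADomain (f^[k]) Ik ∧
        (∀ x : Config A d, ∀ j : Zd d, f^[k] x j = Fk fun i => x (j + i)) ∧
        (∀ u v : Zd d → A, (∀ i ∈ Ik, u i = v i) → Fk u = Fk v) ∧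
        (∀ z : Zd d, z ≠ 0 →
          emb z ∈ Set.extremePoints ℝ (convexHull ℝ (emb '' (Ik ∪ {0}))) →
          PermutativeAt Fk z) ∧
        convexHull ℝ (emb '' (Ik ∪ {0})) = (k : ℝ) • convexHull ℝ (emb '' (I ∪ {0})) :=
  stmt17_general f I hIfin hdom F hF hFloc hperm
end
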